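/- arXiv:1604.04569 — 8 statements merged into one kernel-verified Lean document; each statement's English description precedes it below -/
import Mathlib

section
/- Let X, Y be Banach spaces, Ω ⊆ X open, h : Ω → Y Fréchet differentiable, H : X ⇉ Y a set-valued mapping, A₀ : X → Y a bounded linear mapping, a₀ ∈ Y, G : X ⇉ Y a set-valued mapping, and x̄ ∈ X with 0 ∈ A₀x̄ + a₀ + G(x̄). Assume the mapping x ↦ A₀x + a₀ + G(x) is strongly regular at x̄ for 0 with Lipschitz constant λ > 0. Then there exist r_{x̄} > 0, r_{A₀} > 0, r_{a₀} > 0 and r₀ > 0 such that for every bounded linear A : X → Y with ‖A − A₀‖ < r_{A₀} and every a ∈ Y with ‖a − a₀‖ < r_{a₀}: (a) λ‖A − A₀‖ < 1; (b) for each y with ‖y‖ < r₀ the set {x ∈ X : y ∈ Ax + a + G(x)} ∩ B(x̄, r_{x̄}) is a singleton {σ(y)} with σ(y) ∈ B(x̄, r_{x̄}); and (c) ‖σ(y₁) − σ(y₂)‖ ≤ (λ/(1 − λ‖A − A₀‖))‖y₁ − y₂‖ for all y₁, y₂ ∈ B(0, r₀). -/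
/-!
Write `A x + a = A₀ x + a₀ + φ x` with `φ x = (A - A₀) x + (a - a₀)`. If `s` is the Lipschitz
localization of the unperturbed solution map, then near `x̄` the perturbed inclusion
`y ∈ A x + a + G x` holds exactly when `x` is a fixed point of `x ↦ s (y - φ x)`. This map is a
contraction with constant `λ‖A - A₀‖ < 1`, and for small perturbations it maps a closed ball around
`x̄` into itself, so the Banach fixed point theorem gives a solution. Comparing two fixed points,
`‖x₁ - x₂‖ ≤ λ (‖y₁ - y₂‖ + ‖A - A₀‖ ‖x₁ - x₂‖)`, which gives both uniqueness and the Lipschitz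
constant `λ / (1 - λ‖A - A₀‖)`.
-/

open Metric Set Function

theorem exists_fixedPoint_of_lipschitzOnWith {α : Type*} [MetricSpace α] [CompleteSpace α]
    {f : α → α} {C : Set α} {K : ℝ} (hC : IsClosed C) (hCne : C.Nonempty) (hfC : MapsTo f C C)
    (hK : K < 1) (hf : ∀ x ∈ C, ∀ y ∈ C, dist (f x) (f y) ≤ K * dist x y) :
    ∃ x ∈ C, IsFixedPt f x := by
  obtain ⟨x, hx⟩ := hCne
  have hcontr : ContractingWith K.toNNReal (hfC.restrict f C C) :=
    ⟨Real.toNNReal_lt_one.mpr hK, (LipschitzOnWith.of_dist_le' hf).mapsToRestrict hfC⟩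
  obtain ⟨y, hyC, hy, -⟩ := hcontr.exists_fixedPoint' hC.isComplete hfC hx (edist_ne_top _ _)
  exact ⟨y, hyC, hy⟩

section Perturbation

variable {X Y : Type*} [NormedAddCommGroup X] [NormedAddCommGroup Y]
  {s : Y → X} {φ : X → Y} {V : Set Y} {lam μ : ℝ}

theorem norm_sub_le_of_isFixedPt_perturbation
    (hs : ∀ u ∈ V, ∀ v ∈ V, ‖s u - s v‖ ≤ lam * ‖u - v‖)
    (hφ : ∀ x x', ‖φ x - φ x'‖ ≤ μ * ‖x - x'‖) (hlam : 0 ≤ lam) (hlamμ : lam * μ < 1)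
    {x₁ x₂ : X} {y₁ y₂ : Y} (h₁ : y₁ - φ x₁ ∈ V) (h₂ : y₂ - φ x₂ ∈ V)
    (hx₁ : IsFixedPt (fun x ↦ s (y₁ - φ x)) x₁) (hx₂ : IsFixedPt (fun x ↦ s (y₂ - φ x)) x₂) :
    ‖x₁ - x₂‖ ≤ lam / (1 - lam * μ) * ‖y₁ - y₂‖ := by
  have hstep : ‖x₁ - x₂‖ ≤ lam * (‖y₁ - y₂‖ + μ * ‖x₁ - x₂‖) :=
    calc ‖x₁ - x₂‖ = ‖s (y₁ - φ x₁) - s (y₂ - φ x₂)‖ := by rw [hx₁.eq, hx₂.eq]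
      _ ≤ lam * ‖(y₁ - y₂) - (φ x₁ - φ x₂)‖ := by
        convert hs _ h₁ _ h₂ using 3; abel
      _ ≤ lam * (‖y₁ - y₂‖ + μ * ‖x₁ - x₂‖) := by
        gcongr
        linarith [norm_sub_le (y₁ - y₂) (φ x₁ - φ x₂), hφ x₁ x₂]
  rw [div_mul_eq_mul_div, le_div_iff₀ (by linarith)]
  linarith

theorem exists_localization_of_perturbation [CompleteSpace X] {S : Y → Set X} {U C : Set X}
    {W : Set Y} (hS : ∀ z ∈ V, S z ∩ U = {s z})
    (hs : ∀ u ∈ V, ∀ v ∈ V, ‖s u - s v‖ ≤ lam * ‖u - v‖)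
    (hφ : ∀ x x', ‖φ x - φ x'‖ ≤ μ * ‖x - x'‖) (hlam : 0 ≤ lam) (hlamμ : lam * μ < 1)
    (hC : IsClosed C) (hCne : C.Nonempty) (hCU : C ⊆ U)
    (hV : ∀ y ∈ W, ∀ x ∈ U, y - φ x ∈ V) (hmaps : ∀ y ∈ W, MapsTo (fun x ↦ s (y - φ x)) C C) :
    ∃ σ : Y → X, (∀ y ∈ W, {x | x ∈ S (y - φ x)} ∩ U = {σ y} ∧ σ y ∈ U) ∧
      ∀ y₁ ∈ W, ∀ y₂ ∈ W, ‖σ y₁ - σ y₂‖ ≤ lam / (1 - lam * μ) * ‖y₁ - y₂‖ := by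
  have hfix : ∀ y ∈ W, ∃ x ∈ C, IsFixedPt (fun x ↦ s (y - φ x)) x := fun y hy ↦
    exists_fixedPoint_of_lipschitzOnWith hC hCne (hmaps y hy) hlamμ fun x hx x' hx' ↦ by
      simp only [dist_eq_norm]
      calc ‖s (y - φ x) - s (y - φ x')‖ ≤ lam * ‖(y - φ x) - (y - φ x')‖ :=
            hs _ (hV y hy x (hCU hx)) _ (hV y hy x' (hCU hx'))
        _ ≤ lam * (μ * ‖x - x'‖) := by
          gcongr
          rw [sub_sub_sub_cancel_left, norm_sub_rev]
          exact hφ x x'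
        _ = lam * μ * ‖x - x'‖ := by ring
  choose! σ hσC hσ using hfix
  have hsol : ∀ y ∈ W, ∀ x ∈ U, x ∈ S (y - φ x) ↔ IsFixedPt (fun x ↦ s (y - φ x)) x :=
    fun y hy x hx ↦ by
      have hmem : x ∈ S (y - φ x) ∩ U ↔ x ∈ ({s (y - φ x)} : Set X) := by
        rw [hS _ (hV y hy x hx)]
      rw [mem_inter_iff, and_iff_left hx, mem_singleton_iff] at hmem
      exact hmem.trans eq_comm
  have hlip : ∀ y₁ ∈ W, ∀ y₂ ∈ W, ∀ x₁ ∈ U, ∀ x₂ ∈ U, IsFixedPt (fun x ↦ s (y₁ - φ x)) x₁ →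
      IsFixedPt (fun x ↦ s (y₂ - φ x)) x₂ → ‖x₁ - x₂‖ ≤ lam / (1 - lam * μ) * ‖y₁ - y₂‖ :=
    fun y₁ hy₁ y₂ hy₂ x₁ hx₁ x₂ hx₂ ↦
      norm_sub_le_of_isFixedPt_perturbation hs hφ hlam hlamμ (hV y₁ hy₁ x₁ hx₁) (hV y₂ hy₂ x₂ hx₂)
  refine ⟨σ, fun y hy ↦ ⟨?_, hCU (hσC y hy)⟩, fun y₁ hy₁ y₂ hy₂ ↦
    hlip y₁ hy₁ y₂ hy₂ _ (hCU (hσC y₁ hy₁)) _ (hCU (hσC y₂ hy₂)) (hσ y₁ hy₁) (hσ y₂ hy₂)⟩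
  ext x
  constructor
  · rintro ⟨hxS, hxU⟩
    have := hlip y hy y hy x hxU _ (hCU (hσC y hy)) ((hsol y hy x hxU).mp hxS) (hσ y hy)
    rw [sub_self, norm_zero, mul_zero, norm_le_zero_iff, sub_eq_zero] at this
    exact this
  · rintro rfl
    exact ⟨(hsol y hy _ (hCU (hσC y hy))).mpr (hσ y hy), hCU (hσC y hy)⟩

end Perturbation

section Affine

variable {𝕜 : Type*} [NontriviallyNormedField 𝕜] {X Y : Type*}
  [NormedAddCommGroup X] [NormedSpace 𝕜 X] [NormedAddCommGroup Y] [NormedSpace 𝕜 Y]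

theorem norm_sub_apply_add_lt (E : X →L[𝕜] Y) {e y : Y} {x c : X} {ε r : ℝ} (hy : ‖y‖ < ε)
    (hE : ‖E‖ < ε) (he : ‖e‖ < ε) (hx : ‖x - c‖ < r) : ‖y - (E x + e)‖ < ε * (2 + r + ‖c‖) := by
  have hxc : ‖x‖ < r + ‖c‖ := by linarith [norm_le_norm_sub_add x c]
  have hEx : ‖E x‖ ≤ ε * (r + ‖c‖) :=
    (E.le_opNorm x).trans
      (mul_le_mul hE.le hxc.le (norm_nonneg x) (hy.trans_le' (norm_nonneg y)).le)
  calc ‖y - (E x + e)‖ ≤ ‖y‖ + (‖E x‖ + ‖e‖) :=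
        (norm_sub_le _ _).trans (by gcongr; exact norm_add_le _ _)
    _ < ε * (2 + r + ‖c‖) := by linarith

theorem exists_localization_of_affine_perturbation [CompleteSpace X] {A₀ A : X →L[𝕜] Y}
    {a₀ a : Y} {G : X → Set Y} {xbar : X} {s : Y → X} {lam rx ry R : ℝ} {W : Set Y}
    (hs : ∀ z ∈ ball (0 : Y) ry, {x : X | z - (A₀ x + a₀) ∈ G x} ∩ ball xbar rx = {s z})
    (hslip : ∀ u ∈ ball (0 : Y) ry, ∀ v ∈ ball (0 : Y) ry, ‖s u - s v‖ ≤ lam * ‖u - v‖)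
    (hs0 : s 0 = xbar) (hrx : 0 < rx) (hry : 0 < ry) (hlam : 0 ≤ lam) (hq : lam * ‖A - A₀‖ < 1)
    (hbound : ∀ y ∈ W, ∀ x ∈ ball xbar rx, ‖y - ((A - A₀) x + (a - a₀))‖ < R)
    (hRy : R ≤ ry) (hRx : lam * R ≤ rx / 2) :
    ∃ σ : Y → X,
      (∀ y ∈ W, {x | y - (A x + a) ∈ G x} ∩ ball xbar rx = {σ y} ∧ σ y ∈ ball xbar rx) ∧
      ∀ y₁ ∈ W, ∀ y₂ ∈ W, ‖σ y₁ - σ y₂‖ ≤ lam / (1 - lam * ‖A - A₀‖) * ‖y₁ - y₂‖ := by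
  set φ : X → Y := fun x ↦ (A - A₀) x + (a - a₀)
  have hV : ∀ y ∈ W, ∀ x ∈ ball xbar rx, y - φ x ∈ ball 0 ry :=
    fun y hy x hx ↦ mem_ball_zero_iff.mpr ((hbound y hy x hx).trans_le hRy)
  have hφ : ∀ x x' : X, ‖φ x - φ x'‖ ≤ ‖A - A₀‖ * ‖x - x'‖ := by
    intro x x'
    rw [add_sub_add_right_eq_sub, ← map_sub]
    exact (A - A₀).le_opNorm _
  have hCU : closedBall xbar (rx / 2) ⊆ ball xbar rx := closedBall_subset_ball (half_lt_self hrx)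
  have hmaps : ∀ y ∈ W,
      MapsTo (fun x ↦ s (y - φ x)) (closedBall xbar (rx / 2)) (closedBall xbar (rx / 2)) := by
    intro y hy x hx
    rw [mem_closedBall, dist_eq_norm, ← hs0]
    calc ‖s (y - φ x) - s 0‖ ≤ lam * ‖y - φ x - 0‖ :=
          hslip _ (hV y hy x (hCU hx)) _ (mem_ball_self hry)
      _ ≤ lam * R := by
        rw [sub_zero]; exact mul_le_mul_of_nonneg_left (hbound y hy x (hCU hx)).le hlam
      _ ≤ rx / 2 := hRx
  obtain ⟨σ, hσ, hσlip⟩ := exists_localization_of_perturbation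
    (S := fun z ↦ {x | z - (A₀ x + a₀) ∈ G x}) hs hslip hφ hlam hq
    isClosed_closedBall (nonempty_closedBall.2 (by positivity)) hCU hV hmaps
  have hφ_sub : ∀ (x : X) (y : Y), y - φ x - (A₀ x + a₀) = y - (A x + a) := by
    intro x y; simp only [φ, sub_apply]; abel
  exact ⟨σ, by simpa only [mem_ofPred_eq, hφ_sub] using hσ, hσlip⟩

end Affine

/-- Banach perturbation lemma for strongly regular generalized equations
(Lemma 2.4 / `lem:blr`): if `x ↦ A₀ x + a₀ + G x` is strongly regular at `x̄` for `0`
with Lipschitz constant `lam`, then for all `A` near `A₀` and `a` near `a₀` the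
perturbed mapping `y ↦ {x | y ∈ A x + a + G x}` is single-valued and Lipschitz near `0`. -/
theorem stmt0
    {X Y : Type*} [NormedAddCommGroup X] [NormedSpace ℝ X] [CompleteSpace X]
    [NormedAddCommGroup Y] [NormedSpace ℝ Y] [CompleteSpace Y]
    (A₀ : X →L[ℝ] Y) (a₀ : Y) (G : X → Set Y) (xbar : X)
    (lam : ℝ) (hlam : 0 < lam)
    (hsol : -(A₀ xbar + a₀) ∈ G xbar)
    (hsr : ∃ rx > (0:ℝ), ∃ ry > (0:ℝ), ∃ s : Y → X,
      (∀ z ∈ ball (0:Y) ry,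
        ({y : X | z - (A₀ y + a₀) ∈ G y} ∩ ball xbar rx) = {s z} ∧ s z ∈ ball xbar rx) ∧
      (∀ u ∈ ball (0:Y) ry, ∀ v ∈ ball (0:Y) ry, ‖s u - s v‖ ≤ lam * ‖u - v‖)) :
    ∃ rxbar > (0:ℝ), ∃ rA > (0:ℝ), ∃ ra > (0:ℝ), ∃ r0 > (0:ℝ),
      ∀ A : X →L[ℝ] Y, ‖A - A₀‖ < rA → ∀ a : Y, ‖a - a₀‖ < ra →
        lam * ‖A - A₀‖ < 1 ∧
        ∃ σ : Y → X,
          (∀ y ∈ ball (0:Y) r0,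
            ({x : X | y - (A x + a) ∈ G x} ∩ ball xbar rxbar) = {σ y} ∧
              σ y ∈ ball xbar rxbar) ∧
          (∀ y₁ ∈ ball (0:Y) r0, ∀ y₂ ∈ ball (0:Y) r0,
            ‖σ y₁ - σ y₂‖ ≤ lam / (1 - lam * ‖A - A₀‖) * ‖y₁ - y₂‖) := by
  obtain ⟨rx, hrx, ry, hry, s, hs, hslip⟩ := hsr
  have hs0 : s 0 = xbar := by
    have hxbar : xbar ∈ {x : X | (0 : Y) - (A₀ x + a₀) ∈ G x} ∩ ball xbar rx :=
      ⟨by simpa using hsol, mem_ball_self hrx⟩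
    rw [(hs 0 (mem_ball_self hry)).1] at hxbar
    exact hxbar.symm
  set R := min ry (rx / (2 * lam))
  have hR : 0 < R := lt_min hry (by positivity)
  have hRx : lam * R ≤ rx / 2 :=
    (mul_le_mul_of_nonneg_left (min_le_right _ _) hlam.le).trans_eq (by field_simp)
  obtain ⟨ε, hε, hεlam, hεR⟩ : ∃ ε > 0, lam * ε ≤ 1 ∧ ε * (2 + rx + ‖xbar‖) ≤ R := by
    have hK : 0 < 2 + rx + ‖xbar‖ := by positivity
    refine ⟨min (1 / lam) (R / (2 + rx + ‖xbar‖)), lt_min (by positivity) (div_pos hR hK),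
      ?_, (le_div_iff₀ hK).mp (min_le_right _ _)⟩
    exact (mul_le_mul_of_nonneg_left (min_le_left _ _) hlam.le).trans_eq (by field_simp)
  refine ⟨rx, hrx, ε, hε, ε, hε, ε, hε, fun A hA a ha ↦ ?_⟩
  have hq : lam * ‖A - A₀‖ < 1 := (mul_lt_mul_of_pos_left hA hlam).trans_le hεlam
  have hbound : ∀ y ∈ ball (0 : Y) ε, ∀ x ∈ ball xbar rx, ‖y - ((A - A₀) x + (a - a₀))‖ < R :=
    fun y hy x hx ↦ (norm_sub_apply_add_lt _ (mem_ball_zero_iff.mp hy) hA ha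
      (mem_ball_iff_norm.mp hx)).trans_le hεR
  exact ⟨hq, exists_localization_of_affine_perturbation (fun z hz ↦ (hs z hz).1) hslip hs0 hrx hry
    hlam.le hq hbound (min_le_left _ _) hRx⟩
end

section
/- Let X, Y, Z be Banach spaces, G : X ⇉ Y a set-valued mapping, and g : Z × X → Y a continuous function having a partial Fréchet derivative D_x g with respect to the second variable on Z × X which is also continuous. Let p̄ ∈ Z and suppose x̄ ∈ X satisfies 0 ∈ g(p̄, x̄) + G(x̄). Assume the mapping x ↦ g(p̄, x) + G(x) is strongly regular at x̄ for 0 with Lipschitz constant λ > 0. Then for any ε > 0 there exist r_{p̄} > 0, r_{x̄} > 0 and a single-valued mapping s : B(p̄, r_{p̄}) → B(x̄, r_{x̄}) such that s(p̄) = x̄, for each p ∈ B(p̄, r_{p̄}) the point s(p) is the unique solution in B(x̄, r_{x̄}) of the inclusion 0 ∈ g(p, x) + G(x), and ‖s(p′) − s(p)‖ ≤ (λ + ε)‖g(p′, s(p)) − g(p, s(p))‖ for all p, p′ ∈ B(p̄, r_{p̄}). -/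
/-!
With e(p, x) = g(p̄, x̄) + D_x g(p̄, x̄)(x − x̄) − g(p, x) the error of the partial linearization L,
the inclusion 0 ∈ g(p, x) + G(x) reads e(p, x) − L(x) ∈ G(x). Near x̄ this says x = σ(e(p, x)),
where σ is the λ-Lipschitz localization of L⁻¹ given by strong regularity, so the solutions are
the fixed points of σ ∘ e(p, ·). Continuity of D_x g makes e(p, ·) Lipschitz with an arbitrarily
small constant μ near (p̄, x̄), hence σ ∘ e(p, ·) contracts a small closed ball around x̄ with
constant λμ. Comparing the fixed points for p and p′ gives
‖s(p′) − s(p)‖ ≤ λ / (1 − λμ) · ‖g(p′, s(p)) − g(p, s(p))‖, and μ is chosen so that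
λ / (1 − λμ) = λ + ε.
-/

open Metric Set Function
open scoped NNReal

section FixedPoint

variable {α : Type*} [MetricSpace α] {f f' : α → α} {s : Set α} {K : ℝ≥0}

theorem exists_unique_isFixedPt_of_lipschitzOnWith (hs : IsComplete s) (hne : s.Nonempty)
    (hf : MapsTo f s s) (hlip : LipschitzOnWith K f s) (hK : K < 1) :
    ∃ x ∈ s, IsFixedPt f x ∧ ∀ y ∈ s, IsFixedPt f y → y = x := by
  obtain ⟨x₀, hx₀⟩ := hne
  have hcon : ContractingWith K (hf.restrict f s s) := ⟨hK, hf.lipschitzOnWith_iff_restrict.1 hlip⟩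
  obtain ⟨x, hx, hfx, -⟩ := hcon.exists_fixedPoint' hs hf hx₀ (edist_ne_top _ _)
  refine ⟨x, hx, hfx, fun y hy hfy => ?_⟩
  exact congrArg Subtype.val
    (hcon.fixedPoint_unique' (x := ⟨y, hy⟩) (y := ⟨x, hx⟩) (Subtype.ext hfy) (Subtype.ext hfx))

theorem dist_le_of_isFixedPt_of_lipschitzOnWith (hf' : LipschitzOnWith K f' s) (hK : K < 1)
    {x y : α} (hx : x ∈ s) (hy : y ∈ s) (hfx : IsFixedPt f x) (hf'y : IsFixedPt f' y) :
    dist y x ≤ dist (f' x) (f x) / (1 - K) := by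
  have hK' : (0 : ℝ) < 1 - K := sub_pos.2 (by exact_mod_cast hK)
  rw [le_div_iff₀ hK']
  calc dist y x * (1 - K) = dist (f' y) (f x) - K * dist y x := by rw [hf'y.eq, hfx.eq]; ring
    _ ≤ dist (f' y) (f' x) + dist (f' x) (f x) - dist (f' y) (f' x) := by
      gcongr
      · exact dist_triangle _ _ _
      · exact hf'.dist_le_mul y hy x hx
    _ = dist (f' x) (f x) := by ring

end FixedPoint

section Perturbation

variable {X Y : Type*} [NormedAddCommGroup X] [NormedAddCommGroup Y]
  {σ : Y → X} {e e' : X → Y} {c : X} {a r : ℝ} {Λ M : ℝ≥0}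

theorem norm_le_of_lipschitzOnWith_closedBall (he : LipschitzOnWith M e (closedBall c a))
    {y : X} (hy : y ∈ closedBall c a) : ‖e y‖ ≤ M * a + ‖e c‖ := by
  have hc : c ∈ closedBall c a := mem_closedBall_self (dist_nonneg.trans hy)
  calc ‖e y‖ ≤ ‖e y - e c‖ + ‖e c‖ := norm_le_norm_sub_add _ _
    _ ≤ M * a + ‖e c‖ := by
      rw [← dist_eq_norm]
      gcongr
      exact (he.dist_le_mul y hy c hc).trans (by gcongr; exact mem_closedBall.1 hy)

theorem mapsTo_ball_zero_of_lipschitzOnWith (he : LipschitzOnWith M e (closedBall c a))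
    (hea : Λ * (M * a + ‖e c‖) < a) (har : a ≤ Λ * r) : MapsTo e (closedBall c a) (ball 0 r) := by
  intro y hy
  rw [mem_ball_zero_iff]
  refine lt_of_mul_lt_mul_left ?_ Λ.coe_nonneg
  calc Λ * ‖e y‖ ≤ Λ * (M * a + ‖e c‖) := by
        gcongr; exact norm_le_of_lipschitzOnWith_closedBall he hy
    _ < Λ * r := hea.trans_le har

theorem mapsTo_comp_ball_of_lipschitzOnWith (hσ : LipschitzOnWith Λ σ (ball 0 r)) (hσ0 : σ 0 = c)
    (he : LipschitzOnWith M e (closedBall c a)) (hea : Λ * (M * a + ‖e c‖) < a) (har : a ≤ Λ * r) :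
    MapsTo (σ ∘ e) (closedBall c a) (ball c a) := by
  intro y hy
  have hey := mapsTo_ball_zero_of_lipschitzOnWith he hea har hy
  rw [mem_ball, Function.comp_apply, ← hσ0]
  calc dist (σ (e y)) (σ 0) ≤ Λ * dist (e y) 0 :=
        hσ.dist_le_mul _ hey _ (mem_ball_self (pos_of_mem_ball hey))
    _ ≤ Λ * (M * a + ‖e c‖) := by
      rw [dist_zero_right]; gcongr; exact norm_le_of_lipschitzOnWith_closedBall he hy
    _ < a := hea

theorem exists_unique_isFixedPt_comp [CompleteSpace X] (hσ : LipschitzOnWith Λ σ (ball 0 r))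
    (hσ0 : σ 0 = c) (he : LipschitzOnWith M e (closedBall c a)) (hΛM : Λ * M < 1)
    (hea : Λ * (M * a + ‖e c‖) < a) (har : a ≤ Λ * r) :
    ∃ x ∈ ball c a, IsFixedPt (σ ∘ e) x ∧ ∀ y ∈ closedBall c a, IsFixedPt (σ ∘ e) y → y = x := by
  have hmaps := mapsTo_comp_ball_of_lipschitzOnWith hσ hσ0 he hea har
  have ha : 0 ≤ a := by
    by_contra! ha
    have hK : (Λ * M : ℝ) < 1 := by exact_mod_cast hΛM
    nlinarith [mul_nonneg Λ.coe_nonneg (norm_nonneg (e c))]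
  obtain ⟨x, hx, hfx, huniq⟩ := exists_unique_isFixedPt_of_lipschitzOnWith
    isClosed_closedBall.isComplete ⟨c, mem_closedBall_self ha⟩
    (hmaps.mono_right ball_subset_closedBall)
    (hσ.comp he (mapsTo_ball_zero_of_lipschitzOnWith he hea har)) hΛM
  exact ⟨x, hfx.eq ▸ hmaps hx, hfx, huniq⟩

theorem dist_le_of_isFixedPt_comp (hσ : LipschitzOnWith Λ σ (ball 0 r))
    (he' : LipschitzOnWith M e' (closedBall c a)) (hΛM : Λ * M < 1)
    (he_maps : MapsTo e (closedBall c a) (ball 0 r))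
    (he'_maps : MapsTo e' (closedBall c a) (ball 0 r)) {u v : X} (hu : u ∈ closedBall c a)
    (hv : v ∈ closedBall c a) (hfu : IsFixedPt (σ ∘ e) u) (hfv : IsFixedPt (σ ∘ e') v) :
    dist v u ≤ Λ / (1 - Λ * M) * dist (e' u) (e u) := by
  have hΛM' : (0 : ℝ) < 1 - Λ * M := sub_pos.2 (by exact_mod_cast hΛM)
  calc dist v u ≤ dist (σ (e' u)) (σ (e u)) / (1 - ↑(Λ * M)) :=
        dist_le_of_isFixedPt_of_lipschitzOnWith (hσ.comp he' he'_maps) hΛM hu hv hfu hfv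
    _ ≤ Λ * dist (e' u) (e u) / (1 - Λ * M) := by
        push_cast
        gcongr
        exact hσ.dist_le_mul _ (he'_maps hu) _ (he_maps hu)
    _ = Λ / (1 - Λ * M) * dist (e' u) (e u) := by ring

end Perturbation

section Linearization

variable {X Y Z : Type*} [NormedAddCommGroup X] [NormedSpace ℝ X] [NormedAddCommGroup Y]
  [NormedSpace ℝ Y] {g : Z × X → Y} {A : X →L[ℝ] Y} {pbar p p' : Z}
  {xbar x : X}

def linearizationError (g : Z × X → Y) (A : X →L[ℝ] Y) (pbar : Z) (xbar : X) (p : Z) (x : X) : Y :=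
  g (pbar, xbar) + A (x - xbar) - g (p, x)

theorem linearizationError_sub_eq_neg :
    linearizationError g A pbar xbar p x - (g (pbar, xbar) + A (x - xbar)) = -g (p, x) :=
  sub_sub_cancel_left _ _

@[simp]
theorem linearizationError_self : linearizationError g A pbar xbar pbar xbar = 0 := by
  simp [linearizationError]

theorem dist_linearizationError :
    dist (linearizationError g A pbar xbar p' x) (linearizationError g A pbar xbar p x) =
      dist (g (p', x)) (g (p, x)) :=
  dist_sub_left _ _ _

theorem hasFDerivAt_linearizationError {D : X →L[ℝ] Y}
    (hD : HasFDerivAt (fun x' => g (p, x')) D x) :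
    HasFDerivAt (linearizationError g A pbar xbar p) (A - D) x := by
  have hA : HasFDerivAt (fun x' => A (x' - xbar)) A x := by
    simpa using (A.hasFDerivAt (x := x)).sub_const (A xbar)
  exact (hA.const_add _).sub hD

theorem exists_lipschitzOnWith_linearizationError [PseudoMetricSpace Z] {Dg : Z → X → X →L[ℝ] Y}
    (hDg : ∀ p x, HasFDerivAt (fun x' => g (p, x')) (Dg p x) x)
    (hDgc : ContinuousAt (fun px : Z × X => Dg px.1 px.2) (pbar, xbar)) {M : ℝ≥0} (hM : 0 < M) :
    ∃ δ > 0, ∀ p ∈ ball pbar δ,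
      LipschitzOnWith M (linearizationError g (Dg pbar xbar) pbar xbar p) (ball xbar δ) := by
  obtain ⟨δ, hδ, hclose⟩ := Metric.continuousAt_iff.1 hDgc M hM
  refine ⟨δ, hδ, fun p hp => (convex_ball xbar δ).lipschitzOnWith_of_nnnorm_hasFDerivWithin_le
    (fun x _ => (hasFDerivAt_linearizationError (hDg p x)).hasFDerivWithinAt) fun x hx => ?_⟩
  have hpx : dist (p, x) (pbar, xbar) < δ := by
    rw [Prod.dist_eq]; exact max_lt hp hx
  rw [← NNReal.coe_le_coe, coe_nnnorm, ← dist_eq_norm, dist_comm]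
  exact (hclose hpx).le


theorem exists_radii_of_lipschitzOnWith_linearizationError [PseudoMetricSpace Z] {rx ry δ : ℝ}
    {Λ M : ℝ≥0} (hrx : 0 < rx) (hry : 0 < ry) (hδ : 0 < δ) (hΛ : 0 < Λ) (hΛM : Λ * M < 1)
    (hgc : ContinuousAt (fun p => g (p, xbar)) pbar)
    (he : ∀ p ∈ ball pbar δ, LipschitzOnWith M (linearizationError g A pbar xbar p) (ball xbar δ)) :
    ∃ a > 0, a < rx ∧ a ≤ Λ * ry ∧ ∃ rp > 0, ∀ p ∈ ball pbar rp,
      LipschitzOnWith M (linearizationError g A pbar xbar p) (closedBall xbar a) ∧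
      Λ * (M * a + ‖linearizationError g A pbar xbar p xbar‖) < a := by
  set e := linearizationError g A pbar xbar
  obtain ⟨a, ha, harx, haδ, har⟩ : ∃ a > 0, a < rx ∧ a < δ ∧ a ≤ Λ * ry := by
    have hm : 0 < min (min rx δ) (Λ * ry) := lt_min (lt_min hrx hδ) (by positivity)
    refine ⟨min (min rx δ) (Λ * ry) / 2, half_pos hm, ?_, ?_, ?_⟩ <;>
      linarith [min_le_left (min rx δ) (Λ * ry), min_le_right (min rx δ) (Λ * ry),
        min_le_left rx δ, min_le_right rx δ]
  have hcont : ContinuousAt (fun p => Λ * (M * a + ‖e p xbar‖)) pbar := by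
    have : ContinuousAt (fun p => e p xbar) pbar := continuousAt_const.sub hgc
    fun_prop
  have hlt : Λ * (M * a + ‖e pbar xbar‖) < a := by
    simp only [e, linearizationError_self, norm_zero, add_zero, ← mul_assoc]
    exact mul_lt_of_lt_one_left ha (by exact_mod_cast hΛM)
  obtain ⟨ρ, hρ, hρsmall⟩ :=
    Metric.eventually_nhds_iff_ball.1 (hcont.eventually (gt_mem_nhds hlt))
  refine ⟨a, ha, harx, har, min ρ δ, lt_min hρ hδ, fun p hp => ⟨?_, ?_⟩⟩
  · exact (he p (ball_subset_ball (min_le_right _ _) hp)).mono (closedBall_subset_ball haδ)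
  · exact hρsmall p (ball_subset_ball (min_le_left _ _) hp)

theorem exists_solutionMap_of_lipschitzOnWith_linearizationError [PseudoMetricSpace Z]
    [CompleteSpace X] (G : X → Set Y) (σ : Y → X) {rx ry δ : ℝ} {Λ M : ℝ≥0}
    (hrx : 0 < rx) (hry : 0 < ry) (hδ : 0 < δ) (hΛ : 0 < Λ) (hΛM : Λ * M < 1)
    (hσsol : ∀ z ∈ ball (0 : Y) ry, ∀ y ∈ ball xbar rx,
      z - (g (pbar, xbar) + A (y - xbar)) ∈ G y ↔ σ z = y)
    (hσ : LipschitzOnWith Λ σ (ball 0 ry)) (hσ0 : σ 0 = xbar)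
    (hgc : ContinuousAt (fun p => g (p, xbar)) pbar)
    (he : ∀ p ∈ ball pbar δ, LipschitzOnWith M (linearizationError g A pbar xbar p) (ball xbar δ)) :
    ∃ rp > 0, ∃ a > 0, ∃ s : Z → X, s pbar = xbar ∧
      (∀ p ∈ ball pbar rp, s p ∈ ball xbar a ∧ -g (p, s p) ∈ G (s p) ∧
        ∀ x ∈ ball xbar a, -g (p, x) ∈ G x → x = s p) ∧
      ∀ p ∈ ball pbar rp, ∀ p' ∈ ball pbar rp,
        dist (s p') (s p) ≤ Λ / (1 - Λ * M) * dist (g (p', s p)) (g (p, s p)) := by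
  set e := linearizationError g A pbar xbar
  obtain ⟨a, ha, harx, har, rp, hrp, hrad⟩ :=
    exists_radii_of_lipschitzOnWith_linearizationError hrx hry hδ hΛ hΛM hgc he
  have hmaps : ∀ p ∈ ball pbar rp, MapsTo (e p) (closedBall xbar a) (ball 0 ry) := fun p hp =>
    mapsTo_ball_zero_of_lipschitzOnWith (hrad p hp).1 (hrad p hp).2 har
  have hsol_iff : ∀ p ∈ ball pbar rp, ∀ x ∈ closedBall xbar a,
      -g (p, x) ∈ G x ↔ IsFixedPt (σ ∘ e p) x := fun p hp x hx => by
    rw [← linearizationError_sub_eq_neg (A := A) (pbar := pbar) (xbar := xbar)]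
    exact hσsol _ (hmaps p hp hx) x (closedBall_subset_ball harx hx)
  have hfix : ∀ p, ∃ x, p ∈ ball pbar rp → x ∈ ball xbar a ∧ IsFixedPt (σ ∘ e p) x ∧
      ∀ y ∈ closedBall xbar a, IsFixedPt (σ ∘ e p) y → y = x := fun p => by
    by_cases hp : p ∈ ball pbar rp
    · obtain ⟨x, hx⟩ := exists_unique_isFixedPt_comp hσ hσ0 (hrad p hp).1 hΛM (hrad p hp).2 har
      exact ⟨x, fun _ => hx⟩
    · exact ⟨xbar, fun h => absurd h hp⟩
  choose s hs using hfix
  refine ⟨rp, hrp, a, ha, s, ?_, fun p hp => ?_, fun p hp p' hp' => ?_⟩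
  · have hxbar : IsFixedPt (σ ∘ e pbar) xbar := by
      simp only [IsFixedPt, Function.comp_apply, e, linearizationError_self, hσ0]
    exact ((hs pbar (mem_ball_self hrp)).2.2 xbar (mem_closedBall_self ha.le) hxbar).symm
  · obtain ⟨hsp, hfixp, huniq⟩ := hs p hp
    exact ⟨hsp, (hsol_iff p hp _ (ball_subset_closedBall hsp)).2 hfixp, fun x hx hGx =>
      huniq x (ball_subset_closedBall hx) ((hsol_iff p hp x (ball_subset_closedBall hx)).1 hGx)⟩
  · rw [← dist_linearizationError (A := A) (pbar := pbar) (xbar := xbar)]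
    exact dist_le_of_isFixedPt_comp hσ (hrad p' hp').1 hΛM (hmaps p hp) (hmaps p' hp')
      (ball_subset_closedBall (hs p hp).1) (ball_subset_closedBall (hs p' hp').1)
      (hs p hp).2.1 (hs p' hp').2.1

end Linearization

theorem exists_pos_mul_lt_one_div_one_sub_mul_eq_add {Λ : ℝ≥0} {ε : ℝ} (hΛ : 0 < Λ)
    (hε : 0 < ε) : ∃ M : ℝ≥0, 0 < M ∧ Λ * M < 1 ∧ Λ / (1 - Λ * M : ℝ) = Λ + ε := by
  have hΛ' : (0 : ℝ) < Λ := hΛ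
  have hΛε : (0 : ℝ) < Λ + ε := by linarith
  have hK : (Λ : ℝ) * (ε / (Λ * (Λ + ε))).toNNReal = ε / (Λ + ε) := by
    rw [Real.coe_toNNReal _ (by positivity)]
    field_simp
  refine ⟨(ε / (Λ * (Λ + ε))).toNNReal, Real.toNNReal_pos.2 (by positivity), ?_, ?_⟩
  · rw [← NNReal.coe_lt_coe, NNReal.coe_mul, hK, NNReal.coe_one, div_lt_one hΛε]
    linarith
  · rw [hK, one_sub_div hΛε.ne', add_sub_cancel_right, div_div_eq_mul_div,
      mul_div_cancel_left₀ _ hΛ'.ne']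

theorem stmt1_general
    {X Y Z : Type*} [NormedAddCommGroup X] [NormedSpace ℝ X] [CompleteSpace X]
    [NormedAddCommGroup Y] [NormedSpace ℝ Y]
    [NormedAddCommGroup Z]
    (G : X → Set Y) (g : Z × X → Y) (Dg : Z → X → X →L[ℝ] Y)
    (hg : Continuous g)
    (hDg : ∀ p x, HasFDerivAt (fun x' => g (p, x')) (Dg p x) x)
    (hDgc : Continuous fun px : Z × X => Dg px.1 px.2)
    (pbar : Z) (xbar : X) (lam : ℝ) (hlam : 0 < lam)
    (hsol : -g (pbar, xbar) ∈ G xbar)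
    (hsr : ∃ rx > (0:ℝ), ∃ ry > (0:ℝ), ∃ s : Y → X,
      (∀ z ∈ ball (0:Y) ry,
        ({y : X | z - (g (pbar, xbar) + Dg pbar xbar (y - xbar)) ∈ G y} ∩ ball xbar rx)
            = {s z} ∧ s z ∈ ball xbar rx) ∧
      (∀ u ∈ ball (0:Y) ry, ∀ v ∈ ball (0:Y) ry, ‖s u - s v‖ ≤ lam * ‖u - v‖)) :
    ∀ ε > (0:ℝ), ∃ rp > (0:ℝ), ∃ rx > (0:ℝ), ∃ s : Z → X,
      s pbar = xbar ∧
      (∀ p ∈ ball pbar rp, s p ∈ ball xbar rx ∧ -g (p, s p) ∈ G (s p) ∧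
        ∀ x ∈ ball xbar rx, -g (p, x) ∈ G x → x = s p) ∧
      (∀ p ∈ ball pbar rp, ∀ p' ∈ ball pbar rp,
        ‖s p' - s p‖ ≤ (lam + ε) * ‖g (p', s p) - g (p, s p)‖) := by
  intro ε hε
  obtain ⟨rx, hrx, ry, hry, σ, hσS, hσlip⟩ := hsr
  have hσsol : ∀ z ∈ ball (0 : Y) ry, ∀ y ∈ ball xbar rx,
      z - (g (pbar, xbar) + Dg pbar xbar (y - xbar)) ∈ G y ↔ σ z = y := fun z hz y hy => by
    simpa [hy, eq_comm] using Set.ext_iff.1 (hσS z hz).1 y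
  have hσ0 : σ 0 = xbar :=
    (hσsol 0 (mem_ball_self hry) xbar (mem_ball_self hrx)).1 (by simpa using hsol)
  have hσ : LipschitzOnWith lam.toNNReal σ (ball 0 ry) :=
    LipschitzOnWith.of_dist_le' fun u hu v hv => by
      simpa only [dist_eq_norm] using hσlip u hu v hv
  obtain ⟨M, hM, hΛM, hconst⟩ :=
    exists_pos_mul_lt_one_div_one_sub_mul_eq_add (Real.toNNReal_pos.2 hlam) hε
  obtain ⟨δ, hδ, he⟩ := exists_lipschitzOnWith_linearizationError hDg hDgc.continuousAt hM
  obtain ⟨rp, hrp, a, ha, s, hs0, hsol', hest⟩ :=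
    exists_solutionMap_of_lipschitzOnWith_linearizationError G σ hrx hry hδ
      (Real.toNNReal_pos.2 hlam) hΛM hσsol hσ hσ0
      (hg.comp (Continuous.prodMk_left xbar)).continuousAt he
  refine ⟨rp, hrp, a, ha, s, hs0, hsol', fun p hp p' hp' => ?_⟩
  have hest' := hest p hp p' hp'
  rwa [hconst, Real.coe_toNNReal _ hlam.le, dist_eq_norm, dist_eq_norm] at hest'

/-- Implicit-function theorem for strongly regular generalized equations
(Theorem 5F.4 of Dontchev-Rockafellar / Theorem 2.1 of Robinson).  -/
theorem stmt1
    {X Y Z : Type*} [NormedAddCommGroup X] [NormedSpace ℝ X] [CompleteSpace X]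
    [NormedAddCommGroup Y] [NormedSpace ℝ Y] [CompleteSpace Y]
    [NormedAddCommGroup Z] [NormedSpace ℝ Z] [CompleteSpace Z]
    (G : X → Set Y) (g : Z × X → Y) (Dg : Z → X → X →L[ℝ] Y)
    (hg : Continuous g)
    (hDg : ∀ p x, HasFDerivAt (fun x' => g (p, x')) (Dg p x) x)
    (hDgc : Continuous fun px : Z × X => Dg px.1 px.2)
    (pbar : Z) (xbar : X) (lam : ℝ) (hlam : 0 < lam)
    (hsol : -g (pbar, xbar) ∈ G xbar)
    (hsr : ∃ rx > (0:ℝ), ∃ ry > (0:ℝ), ∃ s : Y → X,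
      (∀ z ∈ ball (0:Y) ry,
        ({y : X | z - (g (pbar, xbar) + Dg pbar xbar (y - xbar)) ∈ G y} ∩ ball xbar rx)
            = {s z} ∧ s z ∈ ball xbar rx) ∧
      (∀ u ∈ ball (0:Y) ry, ∀ v ∈ ball (0:Y) ry, ‖s u - s v‖ ≤ lam * ‖u - v‖)) :
    ∀ ε > (0:ℝ), ∃ rp > (0:ℝ), ∃ rx > (0:ℝ), ∃ s : Z → X,
      s pbar = xbar ∧
      (∀ p ∈ ball pbar rp, s p ∈ ball xbar rx ∧ -g (p, s p) ∈ G (s p) ∧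
        ∀ x ∈ ball xbar rx, -g (p, x) ∈ G x → x = s p) ∧
      (∀ p ∈ ball pbar rp, ∀ p' ∈ ball pbar rp,
        ‖s p' - s p‖ ≤ (lam + ε) * ‖g (p', s p) - g (p, s p)‖) :=
  stmt1_general G g Dg hg hDg hDgc pbar xbar lam hlam hsol hsr
end

section
/- Let X, Y be Banach spaces, Ω ⊆ X open, f : Ω → Y continuous with continuous Fréchet derivative f′, and F : X ⇉ Y a set-valued mapping. Suppose x₀ ∈ Ω and the mapping L_f(x₀, ·) is strongly regular at x₁ for 0 with Lipschitz constant λ > 0. Then there exist constants r_{x₁} > 0, r₀ > 0 and r_{x₀} > 0 with B(x₀, r_{x₀}) ⊆ Ω such that for each x ∈ B(x₀, r_{x₀}): λ‖f′(x) − f′(x₀)‖ < 1; for each z ∈ B(0, r₀) the set L_f(x, z)⁻¹ ∩ B(x₁, r_{x₁}) is a singleton {s_x(z)}; and ‖s_x(u) − s_x(v)‖ ≤ (λ/(1 − λ‖f′(x) − f′(x₀)‖))‖u − v‖ for all u, v ∈ B(0, r₀). -/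
open Metric Set Filter Topology Function

/-! Write `T_z y := s (z - g y)`, where `s` is the Lipschitz localization of `L_f(x₀, ·)⁻¹` and
`g := L_f(x, ·) - L_f(x₀, ·)` is affine with slope `f' x - f' x₀`. Solutions of
`z ∈ L_f(x, y)` near `x₁` are exactly the fixed points of `T_z`, and for `x` close to `x₀`
the map `T_z` is a `λ‖f' x - f' x₀‖`-contraction of a closed ball around `x₁` into itself, so
the Banach fixed point theorem gives the localization `z ↦ s_x(z)`; the Lipschitz bound follows
from `s_x(z) = s (z - g (s_x z))`. -/

theorem exists_isFixedPt_of_mapsTo_of_dist_le {α : Type*} [MetricSpace α] {s : Set α}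
    (hsc : IsComplete s) (hne : s.Nonempty) {T : α → α} (hT : MapsTo T s s) {q : ℝ} (hq : q < 1)
    (hlip : ∀ x ∈ s, ∀ y ∈ s, dist (T x) (T y) ≤ q * dist x y) :
    ∃ x ∈ s, IsFixedPt T x := by
  obtain ⟨x, hx⟩ := hne
  have hK : ContractingWith q.toNNReal (hT.restrict T s s) :=
    ⟨Real.toNNReal_lt_one.2 hq, (LipschitzOnWith.of_dist_le' hlip).mapsToRestrict hT⟩
  obtain ⟨y, hy, hfix, -⟩ := hK.exists_fixedPoint' hsc hT hx (edist_ne_top _ _)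
  exact ⟨y, hy, hfix⟩

theorem eq_of_isFixedPt_of_dist_le {α : Type*} [MetricSpace α] {s : Set α} {T : α → α} {q : ℝ}
    (hq : q < 1) (hlip : ∀ x ∈ s, ∀ y ∈ s, dist (T x) (T y) ≤ q * dist x y)
    {x y : α} (hx : x ∈ s) (hy : y ∈ s) (hTx : IsFixedPt T x) (hTy : IsFixedPt T y) : x = y := by
  have h := hlip x hx y hy
  rw [hTx.eq, hTy.eq] at h
  exact dist_le_zero.1 (by nlinarith [dist_nonneg (x := x) (y := y)])

section

variable {X Y : Type*} [NormedAddCommGroup X] [NormedAddCommGroup Y]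

/-- When `z₁ ∈ G x₁`, this says that `G` is strongly regular at `x₁` for `z₁`, the localization
`s` of `G⁻¹` being the witness. -/
def IsLipschitzLocalization (G : X → Set Y) (x₁ : X) (rx : ℝ) (z₁ : Y) (rz lam : ℝ)
    (s : Y → X) : Prop :=
  (∀ z ∈ ball z₁ rz, {y | z ∈ G y} ∩ ball x₁ rx = {s z}) ∧
    ∀ u ∈ ball z₁ rz, ∀ v ∈ ball z₁ rz, ‖s u - s v‖ ≤ lam * ‖u - v‖

namespace IsLipschitzLocalization

variable {G : X → Set Y} {x₁ : X} {z₁ : Y} {rx rz lam : ℝ} {s : Y → X}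

theorem mem_iff (hs : IsLipschitzLocalization G x₁ rx z₁ rz lam s) {z : Y} (hz : z ∈ ball z₁ rz)
    {y : X} (hy : y ∈ ball x₁ rx) : z ∈ G y ↔ y = s z := by
  have h := Set.ext_iff.1 (hs.1 z hz) y
  simpa only [mem_inter_iff, mem_ofPred_eq, hy, and_true, mem_singleton_iff] using h

theorem apply_center (hs : IsLipschitzLocalization G x₁ rx z₁ rz lam s) (hrx : 0 < rx)
    (hrz : 0 < rz) (h : z₁ ∈ G x₁) : s z₁ = x₁ :=
  ((hs.mem_iff (mem_ball_self hrz) (mem_ball_self hrx)).1 h).symm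

theorem mem_ball_of_perturbation (hs : IsLipschitzLocalization G x₁ rx z₁ rz lam s)
    (hs0 : s z₁ = x₁) (hlam : 0 < lam) {g : X → Y} {κ η ρ r : ℝ} (hκ : 0 ≤ κ)
    (hg : ∀ y ∈ closedBall x₁ ρ, ‖g y - g x₁‖ ≤ κ * ‖y - x₁‖) (hgx : ‖g x₁‖ ≤ η)
    (hrz : r + η + κ * ρ ≤ rz) (hρ : lam * (r + η + κ * ρ) ≤ ρ)
    {z : Y} (hz : z ∈ ball z₁ r) {y : X} (hy : y ∈ closedBall x₁ ρ) :
    z - g y ∈ ball z₁ rz ∧ s (z - g y) ∈ ball x₁ ρ := by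
  have hgy : ‖g y - g x₁‖ ≤ κ * ρ :=
    (hg y hy).trans (mul_le_mul_of_nonneg_left (mem_closedBall_iff_norm.1 hy) hκ)
  have hw : ‖z - g y - z₁‖ < r + η + κ * ρ := calc
    ‖z - g y - z₁‖ = ‖(z - z₁) - (g y - g x₁) - g x₁‖ := by congr 1; abel
    _ ≤ ‖z - z₁‖ + ‖g y - g x₁‖ + ‖g x₁‖ := norm_sub_le_of_le (norm_sub_le _ _) le_rfl
    _ < r + η + κ * ρ := by linarith [mem_ball_iff_norm.1 hz]
  have hw' : z - g y ∈ ball z₁ rz := mem_ball_iff_norm.2 (hw.trans_le hrz)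
  refine ⟨hw', mem_ball_iff_norm.2 ?_⟩
  calc ‖s (z - g y) - x₁‖ = ‖s (z - g y) - s z₁‖ := by rw [hs0]
    _ ≤ lam * ‖z - g y - z₁‖ := hs.2 _ hw' _ (mem_ball_self (pos_of_mem_ball hw'))
    _ < lam * (r + η + κ * ρ) := by gcongr
    _ ≤ ρ := hρ

theorem norm_sub_le_of_apply_sub_eq (hs : IsLipschitzLocalization G x₁ rx z₁ rz lam s)
    (hlam : 0 ≤ lam) {g : X → Y} {κ : ℝ} (hlamκ : lam * κ < 1) {u v : Y} {y y' : X}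
    (hg : ‖g y - g y'‖ ≤ κ * ‖y - y'‖) (hu : u - g y ∈ ball z₁ rz) (hv : v - g y' ∈ ball z₁ rz)
    (hy : s (u - g y) = y) (hy' : s (v - g y') = y') :
    ‖y - y'‖ ≤ lam / (1 - lam * κ) * ‖u - v‖ := by
  have h : ‖y - y'‖ ≤ lam * ‖u - v‖ + lam * κ * ‖y - y'‖ := calc
    ‖y - y'‖ = ‖s (u - g y) - s (v - g y')‖ := by rw [hy, hy']
    _ ≤ lam * ‖(u - g y) - (v - g y')‖ := hs.2 _ hu _ hv
    _ = lam * ‖(u - v) - (g y - g y')‖ := by congr 2; abel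
    _ ≤ lam * (‖u - v‖ + κ * ‖y - y'‖) := by gcongr; exact norm_sub_le_of_le le_rfl hg
    _ = lam * ‖u - v‖ + lam * κ * ‖y - y'‖ := by ring
  rw [div_mul_eq_mul_div, le_div_iff₀ (sub_pos.2 hlamκ)]
  linarith

theorem exists_perturbation [CompleteSpace X] (hs : IsLipschitzLocalization G x₁ rx z₁ rz lam s)
    (hs0 : s z₁ = x₁) (hlam : 0 < lam) {g : X → Y} {κ η ρ r : ℝ} (hκ : 0 ≤ κ)
    (hlamκ : lam * κ < 1)
    (hg : ∀ y ∈ closedBall x₁ ρ, ∀ y' ∈ closedBall x₁ ρ, ‖g y - g y'‖ ≤ κ * ‖y - y'‖)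
    (hgx : ‖g x₁‖ ≤ η) (hρ : 0 ≤ ρ) (hρrx : ρ < rx)
    (hrz : r + η + κ * ρ ≤ rz) (hρ' : lam * (r + η + κ * ρ) ≤ ρ) :
    ∃ s', IsLipschitzLocalization (fun y => {z | z - g y ∈ G y}) x₁ ρ z₁ r
      (lam / (1 - lam * κ)) s' := by
  have hball : ∀ z ∈ ball z₁ r, ∀ y ∈ closedBall x₁ ρ,
      z - g y ∈ ball z₁ rz ∧ s (z - g y) ∈ ball x₁ ρ := fun z hz y hy =>
    hs.mem_ball_of_perturbation hs0 hlam hκ (fun y hy => hg y hy x₁ (mem_closedBall_self hρ)) hgx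
      hrz hρ' hz hy
  have hcontr : ∀ z ∈ ball z₁ r, ∀ y ∈ closedBall x₁ ρ, ∀ y' ∈ closedBall x₁ ρ,
      dist (s (z - g y)) (s (z - g y')) ≤ lam * κ * dist y y' := by
    intro z hz y hy y' hy'
    calc dist (s (z - g y)) (s (z - g y')) ≤ lam * ‖(z - g y) - (z - g y')‖ := by
          rw [dist_eq_norm]; exact hs.2 _ (hball z hz y hy).1 _ (hball z hz y' hy').1
      _ = lam * ‖g y - g y'‖ := by rw [sub_sub_sub_cancel_left, norm_sub_rev]
      _ ≤ lam * (κ * ‖y - y'‖) := by gcongr; exact hg _ hy _ hy'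
      _ = lam * κ * dist y y' := by rw [dist_eq_norm, mul_assoc]
  have hfix : ∀ z ∈ ball z₁ r, ∃ y ∈ closedBall x₁ ρ, IsFixedPt (fun y => s (z - g y)) y :=
    fun z hz => exists_isFixedPt_of_mapsTo_of_dist_le isClosed_closedBall.isComplete
      ⟨x₁, mem_closedBall_self hρ⟩ (fun y hy => ball_subset_closedBall (hball z hz y hy).2) hlamκ
      (hcontr z hz)
  choose! s' hs'ρ hs'fix using hfix
  have hsol : ∀ z ∈ ball z₁ r, ∀ y ∈ closedBall x₁ ρ, z - g y ∈ G y ↔ y = s (z - g y) :=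
    fun z hz y hy => hs.mem_iff (hball z hz y hy).1 (closedBall_subset_ball hρrx hy)
  refine ⟨s', fun z hz => ?_, fun u hu v hv => ?_⟩
  · ext y
    simp only [mem_inter_iff, mem_ofPred_eq, mem_singleton_iff]
    constructor
    · rintro ⟨hyG, hyρ⟩
      have hyρ' := ball_subset_closedBall hyρ
      exact eq_of_isFixedPt_of_dist_le hlamκ (hcontr z hz) hyρ' (hs'ρ z hz)
        ((hsol z hz y hyρ').1 hyG).symm (hs'fix z hz)
    · rintro rfl
      have hz' : s (z - g (s' z)) = s' z := hs'fix z hz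
      exact ⟨(hsol z hz _ (hs'ρ z hz)).2 hz'.symm, hz' ▸ (hball z hz _ (hs'ρ z hz)).2⟩
  · exact norm_sub_le_of_apply_sub_eq hs hlam.le hlamκ (hg _ (hs'ρ u hu) _ (hs'ρ v hv))
      (hball u hu _ (hs'ρ u hu)).1 (hball v hv _ (hs'ρ v hv)).1 (hs'fix u hu) (hs'fix v hv)

theorem exists_uniform_perturbation [CompleteSpace X]
    (hs : IsLipschitzLocalization G x₁ rx z₁ rz lam s) (hs0 : s z₁ = x₁) (hlam : 0 < lam)
    (hrx : 0 < rx) (hrz : 0 < rz) :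
    ∃ ρ > 0, ∃ r > 0, ∃ κ₀ > 0, ∀ (g : X → Y) (κ : ℝ), 0 ≤ κ → κ < κ₀ →
      (∀ y ∈ closedBall x₁ ρ, ∀ y' ∈ closedBall x₁ ρ, ‖g y - g y'‖ ≤ κ * ‖y - y'‖) →
      ‖g x₁‖ < r → lam * κ < 1 ∧
        ∃ s', IsLipschitzLocalization (fun y => {z | z - g y ∈ G y}) x₁ ρ z₁ r
          (lam / (1 - lam * κ)) s' := by
  set ρ := min (rx / 2) (lam * rz)
  set r := min (rz / 4) (ρ / (4 * lam))
  have hρ : 0 < ρ := lt_min (by positivity) (by positivity)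
  have hr : 0 < r := lt_min (by positivity) (by positivity)
  have hρrx : ρ < rx := (min_le_left _ _).trans_lt (half_lt_self hrx)
  have hρrz : ρ ≤ lam * rz := min_le_right _ _
  have hrrz : r ≤ rz / 4 := min_le_left _ _
  have hrρ : 4 * lam * r ≤ ρ := by
    have h : r ≤ ρ / (4 * lam) := min_le_right _ _
    rw [le_div_iff₀ (by positivity)] at h
    linarith
  refine ⟨ρ, hρ, r, hr, 1 / (2 * lam), by positivity, fun g κ hκ hκ₀ hg hgx => ?_⟩
  have hlamκ : lam * κ < 1 / 2 := calc
    lam * κ < lam * (1 / (2 * lam)) := by gcongr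
    _ = 1 / 2 := by field_simp
  have hκρ : κ * ρ ≤ rz / 2 := calc
    κ * ρ ≤ 1 / (2 * lam) * (lam * rz) := by gcongr
    _ = rz / 2 := by field_simp
  have hlamκρ : lam * κ * ρ ≤ 1 / 2 * ρ := mul_le_mul_of_nonneg_right hlamκ.le hρ.le
  refine ⟨by linarith, hs.exists_perturbation hs0 hlam hκ (by linarith) hg hgx.le hρ.le hρrx
    (by linarith) (by linarith)⟩

end IsLipschitzLocalization

end

theorem stmt2_general
    {X Y : Type*} [NormedAddCommGroup X] [NormedSpace ℝ X] [CompleteSpace X]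
    [NormedAddCommGroup Y] [NormedSpace ℝ Y]
    (Ω : Set X) (hΩ : IsOpen Ω)
    (f : X → Y) (f' : X → X →L[ℝ] Y) (F : X → Set Y)
    (hfd : ∀ x ∈ Ω, HasFDerivAt f (f' x) x)
    (hf'c : ContinuousOn f' Ω)
    (x₀ x₁ : X) (hx₀ : x₀ ∈ Ω)
    (lam : ℝ) (hlam : 0 < lam)
    (hx₁sol : -(f x₀ + f' x₀ (x₁ - x₀)) ∈ F x₁)
    (hsr : ∃ r1 > (0:ℝ), ∃ ry > (0:ℝ), ∃ s : Y → X,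
      (∀ z ∈ ball (0:Y) ry,
        ({y : X | z - (f x₀ + f' x₀ (y - x₀)) ∈ F y} ∩ ball x₁ r1) = {s z} ∧
          s z ∈ ball x₁ r1) ∧
      (∀ u ∈ ball (0:Y) ry, ∀ v ∈ ball (0:Y) ry, ‖s u - s v‖ ≤ lam * ‖u - v‖)) :
    ∃ rx1 > (0:ℝ), ∃ r0 > (0:ℝ), ∃ rx0 > (0:ℝ), ball x₀ rx0 ⊆ Ω ∧
      ∀ x ∈ ball x₀ rx0,
        lam * ‖f' x - f' x₀‖ < 1 ∧
        ∃ s : Y → X,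
          (∀ z ∈ ball (0:Y) r0,
            ({y : X | z - (f x + f' x (y - x)) ∈ F y} ∩ ball x₁ rx1) = {s z}) ∧
          (∀ u ∈ ball (0:Y) r0, ∀ v ∈ ball (0:Y) r0,
            ‖s u - s v‖ ≤ lam / (1 - lam * ‖f' x - f' x₀‖) * ‖u - v‖) := by
  obtain ⟨r1, hr1, ry, hry, s, hs, hlip⟩ := hsr
  let G : X → Set Y := fun y => {z | z - (f x₀ + f' x₀ (y - x₀)) ∈ F y}
  let g : X → X → Y := fun x y => f x + f' x (y - x) - (f x₀ + f' x₀ (y - x₀))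
  have hloc : IsLipschitzLocalization G x₁ r1 0 ry lam s := ⟨fun z hz => (hs z hz).1, hlip⟩
  have hs0 : s 0 = x₁ := hloc.apply_center hr1 hry (by simpa [G] using hx₁sol)
  obtain ⟨ρ, hρ, r, hr, κ₀, hκ₀, hpert⟩ := hloc.exists_uniform_perturbation hs0 hlam hr1 hry
  have hg : ∀ x y y', ‖g x y - g x y'‖ ≤ ‖f' x - f' x₀‖ * ‖y - y'‖ := fun x y y' => by
    have : g x y - g x y' = (f' x - f' x₀) (y - y') := by
      simp only [g, sub_apply, map_sub]; abel
    exact this ▸ (f' x - f' x₀).le_opNorm _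
  have hf'x₀ : ContinuousAt f' x₀ := hf'c.continuousAt (hΩ.mem_nhds hx₀)
  have hgx₁ : Tendsto (fun x => g x x₁) (𝓝 x₀) (𝓝 0) := by
    have : ContinuousAt (fun x => g x x₁) x₀ :=
      ((hfd x₀ hx₀).continuousAt.add (hf'x₀.clm_apply (continuousAt_const.sub continuousAt_id))).sub
        continuousAt_const
    simpa [g] using this.tendsto
  have hnear : ∀ᶠ x in 𝓝 x₀, x ∈ Ω ∧ ‖f' x - f' x₀‖ < κ₀ ∧ ‖g x x₁‖ < r :=
    (hΩ.eventually_mem hx₀).and ((tendsto_iff_norm_sub_tendsto_zero.1 hf'x₀.tendsto |>.eventually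
      (gt_mem_nhds hκ₀)).and (hgx₁.norm.eventually (gt_mem_nhds (by simpa using hr))))
  obtain ⟨rx0, hrx0, hball⟩ := Metric.eventually_nhds_iff_ball.1 hnear
  refine ⟨ρ, hρ, r, hr, rx0, hrx0, fun x hx => (hball x hx).1, fun x hx => ?_⟩
  obtain ⟨-, hκ, hgx⟩ := hball x hx
  obtain ⟨hlt, s', hs'⟩ := hpert (g x) _ (norm_nonneg _) hκ (fun y _ y' _ => hg x y y') hgx
  refine ⟨hlt, s', fun z hz => ?_, hs'.2⟩
  simpa only [G, g, mem_ofPred_eq, sub_sub, sub_add_cancel] using hs'.1 z hz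

/-- Corollary `cor:ban`: if the partial linearization `L_f(x₀,·)` is strongly regular at
`x₁` for `0` with Lipschitz constant `lam`, then there are radii `r_{x₁}, r₀, r_{x₀}`
such that for every `x ∈ B(x₀,r_{x₀})` the mapping `z ↦ L_f(x,z)⁻¹ ∩ B(x₁,r_{x₁})` is
single-valued on `B(0,r₀)` and Lipschitz with modulus `lam/(1 - lam‖f'(x)-f'(x₀)‖)`. -/
theorem stmt2
    {X Y : Type*} [NormedAddCommGroup X] [NormedSpace ℝ X] [CompleteSpace X]
    [NormedAddCommGroup Y] [NormedSpace ℝ Y] [CompleteSpace Y]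
    (Ω : Set X) (hΩ : IsOpen Ω)
    (f : X → Y) (f' : X → X →L[ℝ] Y) (F : X → Set Y)
    (hfd : ∀ x ∈ Ω, HasFDerivAt f (f' x) x)
    (hf'c : ContinuousOn f' Ω)
    (x₀ x₁ : X) (hx₀ : x₀ ∈ Ω)
    (lam : ℝ) (hlam : 0 < lam)
    (hx₁sol : -(f x₀ + f' x₀ (x₁ - x₀)) ∈ F x₁)
    (hsr : ∃ r1 > (0:ℝ), ∃ ry > (0:ℝ), ∃ s : Y → X,
      (∀ z ∈ ball (0:Y) ry,
        ({y : X | z - (f x₀ + f' x₀ (y - x₀)) ∈ F y} ∩ ball x₁ r1) = {s z} ∧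
          s z ∈ ball x₁ r1) ∧
      (∀ u ∈ ball (0:Y) ry, ∀ v ∈ ball (0:Y) ry, ‖s u - s v‖ ≤ lam * ‖u - v‖)) :
    ∃ rx1 > (0:ℝ), ∃ r0 > (0:ℝ), ∃ rx0 > (0:ℝ), ball x₀ rx0 ⊆ Ω ∧
      ∀ x ∈ ball x₀ rx0,
        lam * ‖f' x - f' x₀‖ < 1 ∧
        ∃ s : Y → X,
          (∀ z ∈ ball (0:Y) r0,
            ({y : X | z - (f x + f' x (y - x)) ∈ F y} ∩ ball x₁ rx1) = {s z}) ∧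
          (∀ u ∈ ball (0:Y) r0, ∀ v ∈ ball (0:Y) r0,
            ‖s u - s v‖ ≤ lam / (1 - lam * ‖f' x - f' x₀‖) * ‖u - v‖) :=
  stmt2_general Ω hΩ f f' F hfd hf'c x₀ x₁ hx₀ lam hlam hx₁sol hsr
end

section
/- Let R > 0 and ψ : [0, R) → ℝ be continuously differentiable satisfying: (h1) ψ(0) > 0 and ψ′(0) = −1; (h2) ψ′ is convex and strictly increasing; (h3) ψ(t) = 0 for some t ∈ (0, R). Then ψ has a smallest zero t⋆ := min{t ∈ [0, R) : ψ(t) = 0} with t⋆ ∈ (0, R); ψ is strictly convex; ψ(t) > 0 and ψ′(t) < 0 for all t ∈ [0, t⋆); ψ′(t⋆) ≤ 0; and ψ′(t⋆) < 0 if and only if there exists t ∈ (t⋆, R) such that ψ(t) < 0. -/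
open Metric Set Filter
open scoped Topology

/-- Basic properties of the majorant function ψ (Proposition 3 of Ferreira–Svaiter). -/
theorem stmt4 (R : ℝ) (hR : 0 < R) (ψ ψ' : ℝ → ℝ)
    (hψ1 : ∀ t ∈ Ico (0:ℝ) R, HasDerivAt ψ (ψ' t) t)
    (hψ'c : ContinuousOn ψ' (Ico (0:ℝ) R))
    (h1 : 0 < ψ 0) (h1' : ψ' 0 = -1)
    (h2a : ConvexOn ℝ (Ico (0:ℝ) R) ψ')
    (h2b : StrictMonoOn ψ' (Ico (0:ℝ) R))
    (h3 : ∃ t ∈ Ioo (0:ℝ) R, ψ t = 0) :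
    ∃ tstar : ℝ, IsLeast {t ∈ Ico (0:ℝ) R | ψ t = 0} tstar ∧
      tstar ∈ Ioo (0:ℝ) R ∧
      StrictConvexOn ℝ (Ico (0:ℝ) R) ψ ∧
      (∀ t ∈ Ico (0:ℝ) tstar, 0 < ψ t ∧ ψ' t < 0) ∧
      ψ' tstar ≤ 0 ∧
      (ψ' tstar < 0 ↔ ∃ t ∈ Ioo tstar R, ψ t < 0) := by
  obtain ⟨t0, ht0, hψt0⟩ := h3
  have hψcont : ContinuousOn ψ (Ico (0:ℝ) R) := fun t ht =>
    ((hψ1 t ht).continuousAt).continuousWithinAt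
  have ht0I : t0 ∈ Ico (0:ℝ) R := ⟨le_of_lt ht0.1, ht0.2⟩
  -- the set of zeros in [0, t0] is compact and nonempty; take its least element
  have hsub0 : Icc (0:ℝ) t0 ⊆ Ico 0 R := Icc_subset_Ico_right ht0.2
  have hcl : IsClosed (Icc (0:ℝ) t0 ∩ ψ ⁻¹' {0}) :=
    (hψcont.mono hsub0).preimage_isClosed_of_isClosed isClosed_Icc isClosed_singleton
  have hcp : IsCompact (Icc (0:ℝ) t0 ∩ ψ ⁻¹' {0}) :=
    isCompact_Icc.of_isClosed_subset hcl inter_subset_left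
  obtain ⟨tstar, htsm, htsl⟩ := hcp.exists_isLeast
    ⟨t0, ⟨right_mem_Icc.2 ht0.1.le, hψt0⟩⟩
  have htsIcc : tstar ∈ Icc (0:ℝ) t0 := htsm.1
  have htsz : ψ tstar = 0 := htsm.2
  have htsI : tstar ∈ Ico (0:ℝ) R := hsub0 htsIcc
  have htspos : 0 < tstar := by
    rcases lt_or_eq_of_le htsIcc.1 with h | h
    · exact h
    · exact absurd (h ▸ htsz) (by simpa [← h] using h1.ne')
  have htsIoo : tstar ∈ Ioo (0:ℝ) R := ⟨htspos, htsI.2⟩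
  -- IsLeast for the full zero set
  have hleast : IsLeast {t ∈ Ico (0:ℝ) R | ψ t = 0} tstar := by
    refine ⟨⟨htsI, htsz⟩, ?_⟩
    rintro t ⟨htI, htz⟩
    rcases le_or_gt t t0 with h | h
    · exact htsl ⟨⟨htI.1, h⟩, htz⟩
    · exact htsIcc.2.trans h.le
  -- strict convexity
  have hconv : StrictConvexOn ℝ (Ico (0:ℝ) R) ψ := by
    refine StrictMonoOn.strictConvexOn_of_deriv (convex_Ico 0 R) hψcont ?_
    rw [interior_Ico]
    intro x hx y hy hxy
    rw [(hψ1 x (Ioo_subset_Ico_self hx)).deriv, (hψ1 y (Ioo_subset_Ico_self hy)).deriv]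
    exact h2b (Ioo_subset_Ico_self hx) (Ioo_subset_Ico_self hy) hxy
  -- key monotonicity lemma
  have key : ∀ a b : ℝ, a ∈ Ico (0:ℝ) R → b ∈ Ico (0:ℝ) R → a < b → 0 ≤ ψ' a →
      ψ a < ψ b := by
    intro a b ha hb hab ha'
    have hsub : Icc a b ⊆ Ico 0 R := fun x hx => ⟨ha.1.trans hx.1, lt_of_le_of_lt hx.2 hb.2⟩
    have hmono := strictMonoOn_of_deriv_pos (convex_Icc a b) (hψcont.mono hsub) ?_
    · exact hmono (left_mem_Icc.2 hab.le) (right_mem_Icc.2 hab.le) hab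
    · intro x hx
      rw [interior_Icc] at hx
      have hxI : x ∈ Ico (0:ℝ) R := hsub ⟨hx.1.le, hx.2.le⟩
      rw [(hψ1 x hxI).deriv]
      exact lt_of_le_of_lt ha' (h2b ha hxI hx.1)
  -- positivity and negative derivative before tstar
  have hpos : ∀ t ∈ Ico (0:ℝ) tstar, 0 < ψ t := by
    intro t ht
    have htI : t ∈ Ico (0:ℝ) R := ⟨ht.1, ht.2.trans htsI.2⟩
    rcases lt_trichotomy (ψ t) 0 with h | h | h
    · exfalso
      have hsub : Icc (0:ℝ) t ⊆ Ico 0 R := Icc_subset_Ico_right htI.2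
      have := intermediate_value_Icc' ht.1 (hψcont.mono hsub)
      have h0 : (0:ℝ) ∈ Icc (ψ t) (ψ 0) := ⟨h.le, h1.le⟩
      obtain ⟨c, hc, hcz⟩ := this h0
      have : tstar ≤ c := hleast.2 ⟨hsub hc, hcz⟩
      exact absurd (lt_of_le_of_lt (this.trans hc.2) ht.2) (lt_irrefl _)
    · exact absurd (hleast.2 ⟨htI, h⟩) (not_le.2 ht.2)
    · exact h
  have hneg : ∀ t ∈ Ico (0:ℝ) tstar, ψ' t < 0 := by
    intro t ht
    by_contra hcon
    push_neg at hcon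
    have htI : t ∈ Ico (0:ℝ) R := ⟨ht.1, ht.2.trans htsI.2⟩
    have := key t tstar htI htsI ht.2 hcon
    rw [htsz] at this
    exact absurd (hpos t ht) (not_lt.2 this.le)
  -- ψ' tstar ≤ 0 via slopes from the left
  have htend : Tendsto (slope ψ tstar) (𝓝[≠] tstar) (𝓝 (ψ' tstar)) :=
    hasDerivAt_iff_tendsto_slope.1 (hψ1 tstar htsI)
  have hle : ψ' tstar ≤ 0 := by
    have hmem : Ioo 0 tstar ∈ 𝓝[<] tstar := Ioo_mem_nhdsLT_of_mem ⟨htspos, le_refl _⟩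
    have hev : ∀ᶠ t in 𝓝[<] tstar, slope ψ tstar t ≤ 0 := by
      filter_upwards [hmem] with t ht
      have h1t : 0 < ψ t := hpos t ⟨ht.1.le, ht.2⟩
      have : slope ψ tstar t = (ψ t - ψ tstar) / (t - tstar) := by
        rw [slope_def_field]
      rw [this, htsz, sub_zero]
      exact (div_neg_of_pos_of_neg h1t (sub_neg.2 ht.2)).le
    haveI : (𝓝[<] tstar).NeBot := nhdsLT_neBot tstar
    exact le_of_tendsto (htend.mono_left (nhdsWithin_mono _ (fun x (hx : x ∈ Iio tstar) => ne_of_lt hx))) hev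
  refine ⟨tstar, hleast, htsIoo, hconv, fun t ht => ⟨hpos t ht, hneg t ht⟩, hle, ?_, ?_⟩
  · -- ψ' tstar < 0 → ∃ t ∈ Ioo tstar R, ψ t < 0
    intro hlt
    have htend' : Tendsto (slope ψ tstar) (𝓝[>] tstar) (𝓝 (ψ' tstar)) :=
      htend.mono_left (nhdsWithin_mono _ (fun x (hx : x ∈ Ioi tstar) => ne_of_gt hx))
    have hev1 : ∀ᶠ t in 𝓝[>] tstar, slope ψ tstar t < 0 :=
      htend'.eventually_lt_const hlt
    have hev2 : Ioo tstar R ∈ 𝓝[>] tstar := Ioo_mem_nhdsGT_of_mem ⟨le_refl _, htsI.2⟩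
    obtain ⟨t, hts, htmem⟩ := (hev1.and (eventually_of_mem hev2 fun x hx => hx)).exists
    refine ⟨t, htmem, ?_⟩
    have hne : t - tstar ≠ 0 := sub_ne_zero.2 (ne_of_gt htmem.1)
    have : slope ψ tstar t = ψ t / (t - tstar) := by
      simp [slope_def_field, htsz]
    rw [this] at hts
    have := mul_neg_of_neg_of_pos hts (sub_pos.2 htmem.1)
    rwa [div_mul_cancel₀ _ hne] at this
  · -- reverse implication
    rintro ⟨t, htmem, htneg⟩
    by_contra hcon
    push_neg at hcon
    have h0 : 0 ≤ ψ' tstar := hcon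
    have htI : t ∈ Ico (0:ℝ) R := ⟨htsI.1.trans htmem.1.le, htmem.2⟩
    have := key tstar t htsI htI htmem.1 h0
    rw [htsz] at this
    exact absurd htneg (not_lt.2 this.le)
end

section
/- Let R > 0 and ψ : [0, R) → ℝ be continuously differentiable satisfying (h1) ψ(0) > 0 and ψ′(0) = −1; (h2) ψ′ is convex and strictly increasing; (h3) ψ(t) = 0 for some t ∈ (0, R), with t⋆ := min{t ∈ [0, R) : ψ(t) = 0}. Define the Newton iteration map n_ψ(t) := t − ψ(t)/ψ′(t) for t ∈ [0, t⋆). Then for all t ∈ [0, t⋆): n_ψ(t) ∈ [0, t⋆), t < n_ψ(t), and t⋆ − n_ψ(t) ≤ (1/2)(t⋆ − t); moreover the Newton step function t ↦ −ψ(t)/ψ′(t) is decreasing on [0, t⋆). If in addition ψ is twice continuously differentiable and (h4) ψ′(t⋆) < 0 holds, then t⋆ − n_ψ(t) ≤ (ψ″(t⋆)/(−2ψ′(t⋆)))(t⋆ − t)² for all t ∈ [0, t⋆). -/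
/-!
Strict convexity of `ψ` puts its tangent line at `t` below zero at `t⋆`, so the Newton step
`ψ t / -ψ' t` is shorter than `t⋆ - t`. Convexity of `ψ'` together with `ψ' t⋆ ≤ 0` bounds `ψ'` on
`[t, t⋆]` by its chord to `(t⋆, 0)`; integrating shows the step is at least `(t⋆ - t) / 2`.
The error `t⋆ - n_ψ t` is the Taylor remainder `ψ t⋆ - ψ t - ψ' t (t⋆ - t)` divided by `-ψ' t`,
and since the slopes of the convex `ψ'` on `[t, t⋆]` are at most `ψ'' t⋆`, that remainder is at
most `ψ'' t⋆ (t⋆ - t)² / 2`.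
-/

open Set

theorem sub_le_sub_of_hasDerivAt_le {f g f' g' : ℝ → ℝ} {a b : ℝ} (hab : a ≤ b)
    (hf : ∀ x ∈ Icc a b, HasDerivAt f (f' x) x) (hg : ∀ x ∈ Icc a b, HasDerivAt g (g' x) x)
    (hle : ∀ x ∈ Ioo a b, f' x ≤ g' x) : f b - f a ≤ g b - g a := by
  have hderiv : ∀ x ∈ Icc a b, HasDerivAt (fun y => g y - f y) (g' x - f' x) x :=
    fun x hx => (hg x hx).sub (hf x hx)
  have hmono : MonotoneOn (fun y => g y - f y) (Icc a b) := by
    refine monotoneOn_of_hasDerivWithinAt_nonneg (convex_Icc a b) (f' := fun x => g' x - f' x)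
      (fun x hx => (hderiv x hx).continuousAt.continuousWithinAt) ?_ ?_ <;>
      rw [interior_Icc] <;> intro x hx
    · exact (hderiv x (Ioo_subset_Icc_self hx)).hasDerivWithinAt
    · exact sub_nonneg.2 (hle x hx)
  linarith [hmono (left_mem_Icc.2 hab) (right_mem_Icc.2 hab) hab]

theorem sub_le_deriv_mul_half_of_convexOn {f f' : ℝ → ℝ} {a b : ℝ} (hab : a < b)
    (hf : ∀ x ∈ Icc a b, HasDerivAt f (f' x) x) (hconv : ConvexOn ℝ (Icc a b) f')
    (hb : f' b ≤ 0) : f b - f a ≤ f' a * (b - a) / 2 := by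
  have hba : 0 < b - a := sub_pos.2 hab
  have hchord : ∀ x ∈ Icc a b, HasDerivAt (fun y => -(f' a * (b - y) ^ 2 / (2 * (b - a))))
      (f' a * (b - x) / (b - a)) x := by
    intro x _
    refine (((((hasDerivAt_id' x).const_sub b).fun_pow 2).const_mul (f' a)).div_const
      (2 * (b - a))).fun_neg.congr_deriv ?_
    field_simp
    ring
  have hle : ∀ x ∈ Ioo a b, f' x ≤ f' a * (b - x) / (b - a) := by
    intro x hx
    have hconvex := hconv.secant_mono_aux1 (left_mem_Icc.2 hab.le) (right_mem_Icc.2 hab.le) hx.1 hx.2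
    have hend := mul_nonpos_of_nonneg_of_nonpos (sub_nonneg.2 hx.1.le) hb
    rw [le_div_iff₀ hba]
    linarith
  refine (sub_le_sub_of_hasDerivAt_le hab.le hf hchord hle).trans_eq ?_
  field_simp
  ring

theorem sub_sub_deriv_mul_le_of_convexOn {f f' : ℝ → ℝ} {a b c : ℝ} (hab : a ≤ b)
    (hf : ∀ x ∈ Icc a b, HasDerivAt f (f' x) x) (hf' : HasDerivAt f' c b)
    (hconv : ConvexOn ℝ (Icc a b) f') : f b - f a - f' a * (b - a) ≤ c * (b - a) ^ 2 / 2 := by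
  have htaylor : ∀ x ∈ Icc a b, HasDerivAt (fun y => f' a * (y - a) + c * (y - a) ^ 2 / 2)
      (f' a + c * (x - a)) x := by
    intro x _
    refine ((((hasDerivAt_id' x).sub_const a).const_mul (f' a)).fun_add
      ((((hasDerivAt_id' x).sub_const a).fun_pow 2).const_mul c |>.div_const 2)).congr_deriv ?_
    simp only [Nat.cast_ofNat]
    ring
  have hle : ∀ x ∈ Ioo a b, f' x ≤ f' a + c * (x - a) := by
    intro x hx
    have hchord : slope f' a b ≤ c := hconv.slope_le_of_hasDerivAt (left_mem_Icc.2 hab)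
      (right_mem_Icc.2 hab) (hx.1.trans hx.2) hf'
    rw [slope_def_field] at hchord
    have hslope : (f' x - f' a) / (x - a) ≤ c :=
      (hconv.secant_mono_aux2 (left_mem_Icc.2 hab) (right_mem_Icc.2 hab) hx.1 hx.2).trans hchord
    rw [div_le_iff₀ (sub_pos.2 hx.1)] at hslope
    linarith
  linarith [sub_le_sub_of_hasDerivAt_le hab hf htaylor hle]

theorem HasDerivAt.nonpos_of_forall_Ioo_le {f : ℝ → ℝ} {f' a b : ℝ} (hf : HasDerivAt f f' b)
    (hab : a < b) (hle : ∀ x ∈ Ioo a b, f b ≤ f x) : f' ≤ 0 := by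
  refine le_of_tendsto ((hasDerivWithinAt_iff_tendsto_slope' self_notMem_Iio).mp
    hf.hasDerivWithinAt) ?_
  filter_upwards [Ioo_mem_nhdsLT hab] with x hx
  rw [slope_def_field]
  exact div_nonpos_of_nonneg_of_nonpos (sub_nonneg.2 (hle x hx)) (sub_nonpos.2 hx.2.le)

structure IsNewtonMajorant (R : ℝ) (ψ ψ' : ℝ → ℝ) (tstar : ℝ) : Prop where
  hasDerivAt : ∀ t ∈ Ico 0 R, HasDerivAt ψ (ψ' t) t
  pos_zero : 0 < ψ 0
  convexOn_deriv : ConvexOn ℝ (Ico 0 R) ψ'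
  strictMonoOn_deriv : StrictMonoOn ψ' (Ico 0 R)
  isLeast_zero : IsLeast {t ∈ Ico 0 R | ψ t = 0} tstar

noncomputable def newtonStep (ψ ψ' : ℝ → ℝ) (t : ℝ) : ℝ := -(ψ t / ψ' t)

theorem newtonStep_eq_div_neg (ψ ψ' : ℝ → ℝ) (t : ℝ) : newtonStep ψ ψ' t = ψ t / -ψ' t :=
  (div_neg _).symm

namespace IsNewtonMajorant

variable {R : ℝ} {ψ ψ' : ℝ → ℝ} {tstar t : ℝ}

theorem apply_tstar (h : IsNewtonMajorant R ψ ψ' tstar) : ψ tstar = 0 :=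
  h.isLeast_zero.1.2

theorem tstar_lt (h : IsNewtonMajorant R ψ ψ' tstar) : tstar < R :=
  h.isLeast_zero.1.1.2

theorem tstar_pos (h : IsNewtonMajorant R ψ ψ' tstar) : 0 < tstar :=
  h.isLeast_zero.1.1.1.lt_of_ne fun h0 => h.pos_zero.ne' (h0 ▸ h.apply_tstar)

theorem tstar_mem (h : IsNewtonMajorant R ψ ψ' tstar) : tstar ∈ Ico 0 R :=
  ⟨h.tstar_pos.le, h.tstar_lt⟩

theorem Icc_subset (h : IsNewtonMajorant R ψ ψ' tstar) (ht : 0 ≤ t) :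
    Icc t tstar ⊆ Ico 0 R :=
  fun _ hx => ⟨ht.trans hx.1, hx.2.trans_lt h.tstar_lt⟩

theorem Ico_subset (h : IsNewtonMajorant R ψ ψ' tstar) : Ico 0 tstar ⊆ Ico 0 R :=
  Ico_subset_Ico_right h.tstar_lt.le

theorem continuousOn (h : IsNewtonMajorant R ψ ψ' tstar) : ContinuousOn ψ (Ico 0 R) :=
  fun t ht => (h.hasDerivAt t ht).continuousAt.continuousWithinAt

theorem pos_of_mem_Ico (h : IsNewtonMajorant R ψ ψ' tstar) (ht : t ∈ Ico 0 tstar) : 0 < ψ t := by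
  by_contra! hle
  have hsub : Icc 0 t ⊆ Ico 0 R := fun x hx => ⟨hx.1, hx.2.trans_lt (h.Ico_subset ht).2⟩
  obtain ⟨c, hc, hc0⟩ : (0 : ℝ) ∈ ψ '' Icc 0 t :=
    intermediate_value_Icc' ht.1 (h.continuousOn.mono hsub) ⟨hle, h.pos_zero.le⟩
  have := h.isLeast_zero.2 ⟨hsub hc, hc0⟩
  linarith [hc.2, ht.2]

theorem strictConvexOn (h : IsNewtonMajorant R ψ ψ' tstar) : StrictConvexOn ℝ (Ico 0 R) ψ := by
  refine StrictMonoOn.strictConvexOn_of_deriv (convex_Ico 0 R) h.continuousOn ?_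
  rw [interior_Ico]
  refine h.strictMonoOn_deriv.mono Ioo_subset_Ico_self |>.congr fun x hx => ?_
  exact (h.hasDerivAt x (Ioo_subset_Ico_self hx)).deriv.symm

theorem add_deriv_mul_lt_zero (h : IsNewtonMajorant R ψ ψ' tstar) (ht : t ∈ Ico 0 tstar) :
    ψ t + ψ' t * (tstar - t) < 0 := by
  have hslope := h.strictConvexOn.lt_slope_of_hasDerivAt (h.Ico_subset ht) h.tstar_mem
    ht.2 (h.hasDerivAt t (h.Ico_subset ht))
  rw [slope_def_field, h.apply_tstar, lt_div_iff₀ (sub_pos.2 ht.2)] at hslope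
  linarith

theorem deriv_neg (h : IsNewtonMajorant R ψ ψ' tstar) (ht : t ∈ Ico 0 tstar) : ψ' t < 0 := by
  have hneg : ψ' t * (tstar - t) < 0 := by
    linarith [h.add_deriv_mul_lt_zero ht, h.pos_of_mem_Ico ht]
  exact neg_of_mul_neg_left hneg (sub_nonneg.2 ht.2.le)

theorem deriv_tstar_nonpos (h : IsNewtonMajorant R ψ ψ' tstar) : ψ' tstar ≤ 0 :=
  (h.hasDerivAt tstar h.tstar_mem).nonpos_of_forall_Ioo_le h.tstar_pos fun x hx => by
    rw [h.apply_tstar]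
    exact (h.pos_of_mem_Ico (Ioo_subset_Ico_self hx)).le

theorem newtonStep_pos (h : IsNewtonMajorant R ψ ψ' tstar) (ht : t ∈ Ico 0 tstar) :
    0 < newtonStep ψ ψ' t := by
  rw [newtonStep_eq_div_neg]
  exact div_pos (h.pos_of_mem_Ico ht) (neg_pos.2 (h.deriv_neg ht))

theorem newtonStep_lt (h : IsNewtonMajorant R ψ ψ' tstar) (ht : t ∈ Ico 0 tstar) :
    newtonStep ψ ψ' t < tstar - t := by
  rw [newtonStep_eq_div_neg, div_lt_iff₀ (neg_pos.2 (h.deriv_neg ht))]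
  linarith [h.add_deriv_mul_lt_zero ht]

theorem half_le_newtonStep (h : IsNewtonMajorant R ψ ψ' tstar) (ht : t ∈ Ico 0 tstar) :
    (tstar - t) / 2 ≤ newtonStep ψ ψ' t := by
  have hhalf := sub_le_deriv_mul_half_of_convexOn ht.2
    (fun x hx => h.hasDerivAt x (h.Icc_subset ht.1 hx))
    (h.convexOn_deriv.subset (h.Icc_subset ht.1) (convex_Icc _ _)) h.deriv_tstar_nonpos
  rw [newtonStep_eq_div_neg, le_div_iff₀ (neg_pos.2 (h.deriv_neg ht))]
  linarith [h.apply_tstar]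

theorem mul_slope_deriv_le_sq (h : IsNewtonMajorant R ψ ψ' tstar) (ht : t ∈ Ico 0 tstar) :
    ψ t * slope ψ' t tstar ≤ ψ' t ^ 2 := by
  have hgap : 0 < tstar - t := sub_pos.2 ht.2
  have hmono : ψ' t ≤ ψ' tstar :=
    (h.strictMonoOn_deriv (h.Ico_subset ht) h.tstar_mem ht.2).le
  have hslope : 0 ≤ slope ψ' t tstar := by
    rw [slope_def_field]
    exact div_nonneg (sub_nonneg.2 hmono) hgap.le
  calc ψ t * slope ψ' t tstar ≤ -ψ' t * (tstar - t) * slope ψ' t tstar := by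
        gcongr
        linarith [h.add_deriv_mul_lt_zero ht]
    _ = -ψ' t * (ψ' tstar - ψ' t) := by
        rw [slope_def_field]
        field_simp
    _ ≤ -ψ' t * -ψ' t := by
        gcongr
        · linarith [h.deriv_neg ht]
        · linarith [h.deriv_tstar_nonpos]
    _ = ψ' t ^ 2 := by ring

/-- With `s` the slope of `ψ'` on `[a, b]`, the gap `ψ a * -ψ' b - ψ b * -ψ' a` is
`-ψ' b` times the tangent defect of `ψ` at `b` plus `(b - a) * (ψ' b ^ 2 - ψ b * s)`; the latter is
nonnegative because `s ≤ slope ψ' b tstar` by convexity of `ψ'`. -/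
theorem antitoneOn_newtonStep (h : IsNewtonMajorant R ψ ψ' tstar) :
    AntitoneOn (newtonStep ψ ψ') (Ico 0 tstar) := by
  intro a ha b hb hab
  rcases hab.eq_or_lt with rfl | hab
  · rfl
  have ha' := h.Ico_subset ha
  have hb' := h.Ico_subset hb
  have hψb := h.pos_of_mem_Ico hb
  have hψ'b := h.deriv_neg hb
  have htangent : slope ψ a b ≤ ψ' b :=
    h.strictConvexOn.convexOn.slope_le_of_hasDerivAt ha' hb' hab (h.hasDerivAt b hb')
  rw [slope_def_field, div_le_iff₀ (sub_pos.2 hab)] at htangent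
  set s := (ψ' b - ψ' a) / (b - a) with hs_def
  have hs : ψ' a = ψ' b - s * (b - a) := by
    rw [hs_def]
    field_simp [(sub_pos.2 hab).ne']
    ring
  have hsle : ψ b * s ≤ ψ' b ^ 2 := by
    refine le_trans ?_ (h.mul_slope_deriv_le_sq hb)
    rw [slope_def_field]
    gcongr
    exact h.convexOn_deriv.slope_mono_adjacent ha' h.tstar_mem hab hb.2
  rw [newtonStep_eq_div_neg, newtonStep_eq_div_neg, div_le_div_iff₀ (neg_pos.2 hψ'b)
    (neg_pos.2 (h.deriv_neg ha))]
  calc ψ b * -ψ' a = ψ b * -ψ' b + ψ b * s * (b - a) := by rw [hs]; ring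
    _ ≤ ψ b * -ψ' b + ψ' b ^ 2 * (b - a) := by gcongr
    _ = -ψ' b * (ψ b - ψ' b * (b - a)) := by ring
    _ ≤ -ψ' b * ψ a := mul_le_mul_of_nonneg_left (by linarith) (by linarith)
    _ = ψ a * -ψ' b := by ring

theorem sub_sub_newtonStep_le (h : IsNewtonMajorant R ψ ψ' tstar) {c : ℝ}
    (hc : HasDerivAt ψ' c tstar) (hneg : ψ' tstar < 0) (ht : t ∈ Ico 0 tstar) :
    tstar - t - newtonStep ψ ψ' t ≤ c / (-2 * ψ' tstar) * (tstar - t) ^ 2 := by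
  have hψ't := h.deriv_neg ht
  have hmono : ψ' t ≤ ψ' tstar :=
    (h.strictMonoOn_deriv (h.Ico_subset ht) h.tstar_mem ht.2).le
  have htaylor := sub_sub_deriv_mul_le_of_convexOn ht.2.le
    (fun x hx => h.hasDerivAt x (h.Icc_subset ht.1 hx)) hc
    (h.convexOn_deriv.subset (h.Icc_subset ht.1) (convex_Icc _ _))
  rw [h.apply_tstar, zero_sub] at htaylor
  have hdefect : 0 ≤ -ψ t - ψ' t * (tstar - t) := by linarith [h.add_deriv_mul_lt_zero ht]
  calc tstar - t - newtonStep ψ ψ' t = (-ψ t - ψ' t * (tstar - t)) / -ψ' t := by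
        rw [newtonStep_eq_div_neg]
        field_simp [hψ't.ne]
        ring
    _ ≤ (-ψ t - ψ' t * (tstar - t)) / -ψ' tstar := by
        gcongr
        linarith
    _ ≤ c * (tstar - t) ^ 2 / 2 / -ψ' tstar := by
        gcongr
        linarith
    _ = c / (-2 * ψ' tstar) * (tstar - t) ^ 2 := by
        field_simp

end IsNewtonMajorant

theorem stmt5_general (R : ℝ) (ψ ψ' : ℝ → ℝ)
    (hψ1 : ∀ t ∈ Ico (0:ℝ) R, HasDerivAt ψ (ψ' t) t)
    (h1 : 0 < ψ 0)
    (h2a : ConvexOn ℝ (Ico (0:ℝ) R) ψ')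
    (h2b : StrictMonoOn ψ' (Ico (0:ℝ) R))
    (tstar : ℝ) (h3 : IsLeast {t ∈ Ico (0:ℝ) R | ψ t = 0} tstar)
    (nψ : ℝ → ℝ) (hnψ : ∀ t : ℝ, nψ t = t - ψ t / ψ' t) :
    (∀ t ∈ Ico (0:ℝ) tstar,
      nψ t ∈ Ico (0:ℝ) tstar ∧ t < nψ t ∧ tstar - nψ t ≤ 1 / 2 * (tstar - t)) ∧
    AntitoneOn (fun t => -(ψ t / ψ' t)) (Ico (0:ℝ) tstar) ∧
    (∀ ψ'' : ℝ → ℝ, (∀ u ∈ Ico (0:ℝ) R, HasDerivAt ψ' (ψ'' u) u) →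
      ContinuousOn ψ'' (Ico (0:ℝ) R) → ψ' tstar < 0 →
      ∀ t ∈ Ico (0:ℝ) tstar,
        tstar - nψ t ≤ ψ'' tstar / (-2 * ψ' tstar) * (tstar - t) ^ 2) := by
  have h : IsNewtonMajorant R ψ ψ' tstar := ⟨hψ1, h1, h2a, h2b, h3⟩
  have hn : ∀ t, nψ t = t + newtonStep ψ ψ' t := fun t => by
    rw [hnψ, newtonStep, sub_eq_add_neg]
  refine ⟨fun t ht => ?_, h.antitoneOn_newtonStep, fun ψ'' hψ'' _ hneg t ht => ?_⟩
  · have hpos := h.newtonStep_pos ht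
    have hlt := h.newtonStep_lt ht
    have hhalf := h.half_le_newtonStep ht
    rw [hn]
    exact ⟨⟨by linarith [ht.1], by linarith⟩, by linarith, by linarith⟩
  · rw [hn, ← sub_sub]
    exact h.sub_sub_newtonStep_le (hψ'' tstar h.tstar_mem) hneg ht

/-- Properties of the scalar Newton iteration map `n_ψ` (Lemma `eq.ratemajor`). -/
theorem stmt5 (R : ℝ) (hR : 0 < R) (ψ ψ' : ℝ → ℝ)
    (hψ1 : ∀ t ∈ Ico (0:ℝ) R, HasDerivAt ψ (ψ' t) t)
    (hψ'c : ContinuousOn ψ' (Ico (0:ℝ) R))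
    (h1 : 0 < ψ 0) (h1' : ψ' 0 = -1)
    (h2a : ConvexOn ℝ (Ico (0:ℝ) R) ψ')
    (h2b : StrictMonoOn ψ' (Ico (0:ℝ) R))
    (tstar : ℝ) (h3 : IsLeast {t ∈ Ico (0:ℝ) R | ψ t = 0} tstar)
    (nψ : ℝ → ℝ) (hnψ : ∀ t : ℝ, nψ t = t - ψ t / ψ' t) :
    (∀ t ∈ Ico (0:ℝ) tstar,
      nψ t ∈ Ico (0:ℝ) tstar ∧ t < nψ t ∧ tstar - nψ t ≤ 1 / 2 * (tstar - t)) ∧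
    AntitoneOn (fun t => -(ψ t / ψ' t)) (Ico (0:ℝ) tstar) ∧
    (∀ ψ'' : ℝ → ℝ, (∀ u ∈ Ico (0:ℝ) R, HasDerivAt ψ' (ψ'' u) u) →
      ContinuousOn ψ'' (Ico (0:ℝ) R) → ψ' tstar < 0 →
      ∀ t ∈ Ico (0:ℝ) tstar,
        tstar - nψ t ≤ ψ'' tstar / (-2 * ψ' tstar) * (tstar - t) ^ 2) :=
  stmt5_general R ψ ψ' hψ1 h1 h2a h2b tstar h3 nψ hnψ
end

section
/- Under the standing assumptions (A1)–(A4) and (h1)–(h3), for any x ∈ B(x₀, t⋆): for each z ∈ B(0, r₀) the set L_f(x, z)⁻¹ ∩ B(x₁, r_{x₁}) is a singleton {s_x(z)}, and ‖s_x(u) − s_x(v)‖ ≤ (−λ/ψ′(‖x − x₀‖))‖u − v‖ for all u, v ∈ B(0, r₀). -/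
open Metric Set Filter

/-- Proposition `wdns`: on `B(x₀,t⋆)` the mapping `z ↦ L_f(x,z)⁻¹ ∩ B(x₁,r_{x₁})` is single-valued on `B(0,r₀)` and Lipschitz with modulus `-lam/ψ'(‖x-x₀‖)`. -/
theorem stmt7
    {X Y : Type*} [NormedAddCommGroup X] [NormedSpace ℝ X] [CompleteSpace X]
    [NormedAddCommGroup Y] [NormedSpace ℝ Y] [CompleteSpace Y]
    (Ω : Set X) (hΩ : IsOpen Ω)
    (f : X → Y) (f' : X → X →L[ℝ] Y) (F : X → Set Y)
    (hfd : ∀ x ∈ Ω, HasFDerivAt f (f' x) x)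
    (hf'c : ContinuousOn f' Ω)
    (hFg : IsClosed {p : X × Y | p.2 ∈ F p.1})
    (x₀ : X) (hx₀ : x₀ ∈ Ω) (R : ℝ) (hR : 0 < R)
    (κ : ℝ) (hκ : κ = sSup {t : ℝ | t ∈ Ico (0:ℝ) R ∧ ball x₀ t ⊆ Ω})
    -- (A1): strong-regularity constants and the single-valued selection `s`
    (x₁ : X) (hx₁ : x₁ ∈ Ω)
    (hx₁sol : -(f x₀ + f' x₀ (x₁ - x₀)) ∈ F x₁)
    (lam rx1 r0 rx0 : ℝ)
    (hlam : 0 < lam) (hrx1 : 0 < rx1) (hr0 : 0 < r0) (hrx0 : 0 < rx0)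
    (hball : ball x₀ rx0 ⊆ Ω)
    (s : X → Y → X)
    (hA1 : ∀ x ∈ ball x₀ rx0,
      lam * ‖f' x - f' x₀‖ < 1 ∧
      (∀ z ∈ ball (0:Y) r0,
        ({y : X | z - (f x + f' x (y - x)) ∈ F y} ∩ ball x₁ rx1) = {s x z}) ∧
      (∀ u ∈ ball (0:Y) r0, ∀ v ∈ ball (0:Y) r0,
        ‖s x u - s x v‖ ≤ lam / (1 - lam * ‖f' x - f' x₀‖) * ‖u - v‖))
    -- (A2): the majorant function ψ and the majorant condition
    (ψ ψ' ψ'' : ℝ → ℝ)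
    (hψ1 : ∀ t ∈ Ico (0:ℝ) R, HasDerivAt ψ (ψ' t) t)
    (hψ2 : ∀ t ∈ Ico (0:ℝ) R, HasDerivAt ψ' (ψ'' t) t)
    (hψ2c : ContinuousOn ψ'' (Ico (0:ℝ) R))
    (hmaj : ∀ x ∈ ball x₀ κ, ∀ y ∈ ball x₀ κ, ‖y - x‖ + ‖x - x₀‖ < R →
      lam * ‖f' y - f' x‖ ≤ ψ' (‖y - x‖ + ‖x - x₀‖) - ψ' ‖x - x₀‖)
    -- (A3)
    (hA3 : ‖x₁ - x₀‖ ≤ ψ 0)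
    -- (h1)-(h3)
    (h1 : 0 < ψ 0) (h1' : ψ' 0 = -1)
    (h2a : ConvexOn ℝ (Ico (0:ℝ) R) ψ')
    (h2b : StrictMonoOn ψ' (Ico (0:ℝ) R))
    (tstar : ℝ)
    (h3 : IsLeast {t ∈ Ico (0:ℝ) R | ψ t = 0} tstar)
    -- (A4)
    (hA4a : tstar ≤ min κ rx0)
    (hA4b : ψ'' tstar / (2 * lam) * ψ 0 ^ 2 < r0)
    :
    ∀ x ∈ ball x₀ tstar,
      (∀ z ∈ ball (0:Y) r0,
        ({y : X | z - (f x + f' x (y - x)) ∈ F y} ∩ ball x₁ rx1) = {s x z}) ∧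
      (∀ u ∈ ball (0:Y) r0, ∀ v ∈ ball (0:Y) r0,
        ‖s x u - s x v‖ ≤ -lam / ψ' ‖x - x₀‖ * ‖u - v‖) := by

  intro x hx
  have htstar0 : 0 ≤ tstar := h3.1.1.1
  have htstarR : tstar < R := h3.1.1.2
  have hψt0 : ψ tstar = 0 := h3.1.2
  set t := ‖x - x₀‖ with htdef
  have ht0 : (0:ℝ) ≤ t := norm_nonneg _
  have httstar : t < tstar := mem_ball_iff_norm.mp hx
  have htR : t < R := httstar.trans htstarR
  have hxrx0 : x ∈ ball x₀ rx0 :=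
    mem_ball.mpr (lt_of_lt_of_le (mem_ball.mp hx) (hA4a.trans (min_le_right _ _)))
  obtain ⟨hsm, hsing, hlip⟩ := hA1 x hxrx0
  -- ψ is positive on [0, tstar)
  have hψpos : ∀ u, 0 ≤ u → u < tstar → 0 < ψ u := by
    intro u hu0 hut
    by_contra h
    push_neg at h
    have hcont : ContinuousOn ψ (Icc 0 u) := fun a ha =>
      ((hψ1 a ⟨ha.1, lt_of_le_of_lt ha.2 (hut.trans htstarR)⟩).continuousAt).continuousWithinAt
    have h0m : (0:ℝ) ∈ Icc (ψ u) (ψ 0) := ⟨h, h1.le⟩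
    obtain ⟨c, hc, hψc⟩ := intermediate_value_Icc' hu0 hcont h0m
    have := h3.2 ⟨⟨hc.1, lt_of_le_of_lt hc.2 (hut.trans htstarR)⟩, hψc⟩
    linarith [hc.2]
  -- ψ' t < 0
  have hψ'neg : ψ' t < 0 := by
    by_contra h
    push_neg at h
    have hcont : ContinuousOn ψ (Icc t tstar) := fun a ha =>
      ((hψ1 a ⟨le_trans ht0 ha.1, lt_of_le_of_lt ha.2 htstarR⟩).continuousAt).continuousWithinAt
    have hderiv : ∀ a ∈ Ioo t tstar, HasDerivAt ψ (ψ' a) a := fun a ha =>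
      hψ1 a ⟨le_trans ht0 ha.1.le, ha.2.trans htstarR⟩
    obtain ⟨c, hc, hceq⟩ := exists_hasDerivAt_eq_slope ψ ψ' httstar hcont hderiv
    have hmono : ψ' t < ψ' c :=
      h2b ⟨ht0, htR⟩ ⟨le_trans ht0 hc.1.le, hc.2.trans htstarR⟩ hc.1
    have hψtpos : 0 < ψ t := hψpos t ht0 httstar
    have hslope : (ψ tstar - ψ t) / (tstar - t) < 0 :=
      div_neg_of_neg_of_pos (by linarith) (by linarith)
    rw [hceq] at hmono
    linarith
  -- majorant estimate with base point x₀
  have hκpos : 0 < κ := lt_of_lt_of_le (lt_of_le_of_lt ht0 httstar)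
    (hA4a.trans (min_le_left _ _))
  have hxκ : x ∈ ball x₀ κ :=
    mem_ball.mpr (lt_of_lt_of_le (mem_ball.mp hx) (hA4a.trans (min_le_left _ _)))
  have hmaj' := hmaj x₀ (mem_ball_self hκpos) x hxκ (by simp [← htdef]; linarith)
  simp only [sub_self, norm_zero, add_zero, h1'] at hmaj'
  rw [← htdef] at hmaj'
  have hden : 0 < -ψ' t := neg_pos.mpr hψ'neg
  have hden2 : -ψ' t ≤ 1 - lam * ‖f' x - f' x₀‖ := by linarith
  refine ⟨hsing, fun u hu v hv => ?_⟩
  calc ‖s x u - s x v‖ ≤ lam / (1 - lam * ‖f' x - f' x₀‖) * ‖u - v‖ := hlip u hu v hv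
    _ ≤ -lam / ψ' t * ‖u - v‖ := by
        apply mul_le_mul_of_nonneg_right _ (norm_nonneg _)
        rw [neg_div, ← div_neg]
        gcongr
end

section
/- Under the standing assumptions (A1)–(A4) and (h1)–(h3), take x, y ∈ B(x₀, κ) and 0 ≤ t < v < R. If ‖x − x₀‖ ≤ t and ‖y − x‖ ≤ v − t, then λ‖E_f(x, y)‖ ≤ e_ψ(t, v)·‖y − x‖²/(v − t)² ≤ (1/2)ψ″(v)(v − t)², where E_f(x, y) := f(y) − f(x) − f′(x)(y − x) and e_ψ(t, v) := ψ(v) − ψ(t) − ψ′(t)(v − t). -/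
/-!
Along the segment `x + τ • (y - x)`, the majorant condition bounds the growth of `f'` by that of
`ψ'` at the point `‖x - x₀‖ ≤ t`. Since increments of the convex function `ψ'` grow when the
interval is moved to the right or lengthened, this bound can be pushed to the interval
`[t, t + τ (v - t)]`, which makes `‖(f' (x + τ • (y - x)) - f' x) (y - x)‖` at most the derivative
of `τ ↦ e_ψ(t, t + τ (v - t)) ‖y - x‖² / (λ (v - t)²)`. The mean value inequality then gives the
first estimate. For the second, `‖y - x‖ ≤ v - t`, `e_ψ(t, v) ≥ 0` because `ψ'` is increasing, and
convexity of `ψ'` gives `ψ' u - ψ' t ≤ ψ'' v (u - t)` on `[t, v]`, which integrates to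
`e_ψ(t, v) ≤ ψ'' v (v - t)² / 2`.
-/

open Metric Set

theorem ConvexOn.slope_le_slope_of_le {𝕜 : Type*} [Field 𝕜] [LinearOrder 𝕜] [IsStrictOrderedRing 𝕜]
    {s : Set 𝕜} {g : 𝕜 → 𝕜} (hg : ConvexOn 𝕜 s g) {a b c d : 𝕜}
    (ha : a ∈ s) (hb : b ∈ s) (hc : c ∈ s) (hd : d ∈ s)
    (hab : a ≤ b) (hcd : c ≤ d) (hac : a < c) (hbd : b < d) :
    slope g a c ≤ slope g b d := by
  have had : a < d := hab.trans_lt hbd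
  calc slope g a c ≤ slope g a d := hg.slope_mono ha ⟨hc, hac.ne'⟩ ⟨hd, had.ne'⟩ hcd
    _ = slope g d a := slope_comm g a d
    _ ≤ slope g d b := hg.slope_mono hd ⟨ha, had.ne⟩ ⟨hb, hbd.ne⟩ hab
    _ = slope g b d := slope_comm g d b

theorem ConvexOn.sub_mul_le_sub_mul {s : Set ℝ} {g : ℝ → ℝ} (hg : ConvexOn ℝ s g)
    {b t h k : ℝ} (hb : b ∈ s) (ht : t ∈ s) (hbh : b + h ∈ s) (htk : t + k ∈ s)
    (hbt : b ≤ t) (h0 : 0 ≤ h) (hhk : h ≤ k) :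
    (g (b + h) - g b) * k ≤ (g (t + k) - g t) * h := by
  rcases h0.eq_or_lt with rfl | hpos
  · simp
  have hslope := hg.slope_le_slope_of_le hb ht hbh htk hbt (by linarith) (by linarith) (by linarith)
  rw [slope_def_field, slope_def_field, add_sub_cancel_left, add_sub_cancel_left,
    div_le_div_iff₀ hpos (hpos.trans_le hhk)] at hslope
  exact hslope

theorem tangent_le_of_monotoneOn_deriv {ψ ψ' : ℝ → ℝ} {t v : ℝ} (htv : t < v)
    (hψ : ∀ u ∈ Icc t v, HasDerivAt ψ (ψ' u) u) (hmono : MonotoneOn ψ' (Icc t v)) :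
    ψ t + ψ' t * (v - t) ≤ ψ v := by
  obtain ⟨c, hc, hslope⟩ := exists_hasDerivAt_eq_slope ψ ψ' htv
    (fun u hu => (hψ u hu).continuousAt.continuousWithinAt) (fun u hu => hψ u (Ioo_subset_Icc_self hu))
  have hψ'c : ψ' t ≤ ψ' c := hmono (left_mem_Icc.2 htv.le) (Ioo_subset_Icc_self hc) hc.1.le
  rw [hslope, le_div_iff₀ (sub_pos.2 htv)] at hψ'c
  linarith

theorem le_tangent_add_of_convexOn_deriv {ψ ψ' : ℝ → ℝ} {t v c : ℝ} (htv : t ≤ v)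
    (hψ : ∀ u ∈ Icc t v, HasDerivAt ψ (ψ' u) u) (hconv : ConvexOn ℝ (Icc t v) ψ')
    (hψ' : HasDerivAt ψ' c v) :
    ψ v ≤ ψ t + ψ' t * (v - t) + 1 / 2 * c * (v - t) ^ 2 := by
  have hderiv_le : ∀ u ∈ Ico t v, ψ' u - ψ' t ≤ c * (u - t) := by
    rintro u ⟨htu, huv⟩
    rcases htu.eq_or_lt with rfl | htu
    · simp
    have hslope : slope ψ' t u ≤ c :=
      (hconv.slope_le_slope_of_le ⟨le_rfl, htv⟩ ⟨htu.le, huv.le⟩ ⟨htu.le, huv.le⟩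
        ⟨htv, le_rfl⟩ htu.le huv.le htu huv).trans
        (hconv.slope_le_of_hasDerivAt ⟨htu.le, huv.le⟩ ⟨htv, le_rfl⟩ huv hψ')
    rw [slope_def_field, div_le_iff₀ (sub_pos.2 htu)] at hslope
    exact hslope
  have key := image_le_of_deriv_right_le_deriv_boundary
    (f := fun u => ψ u - (ψ t + ψ' t * (u - t))) (f' := fun u => ψ' u - ψ' t)
    (B := fun u => 1 / 2 * c * (u - t) ^ 2) (B' := fun u => c * (u - t))
    (fun u hu => ((hψ u hu).continuousAt.sub (by fun_prop)).continuousWithinAt)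
    (fun u hu => by
      have := (hψ u (Ico_subset_Icc_self hu)).sub
        (((hasDerivAt_id u).sub_const t).const_mul (ψ' t) |>.const_add (ψ t))
      exact (this.congr_deriv (by simp)).hasDerivWithinAt)
    (by simp) (by fun_prop)
    (fun u _ => by
      have := (((hasDerivAt_id u).sub_const t).pow 2).const_mul (1 / 2 * c)
      exact (this.congr_deriv (by simp; ring)).hasDerivWithinAt)
    hderiv_le (right_mem_Icc.2 htv)
  linarith

theorem ball_sSup_subset {X : Type*} [PseudoMetricSpace X] {x₀ : X} {Ω : Set X} {S : Set ℝ}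
    (hS : ∀ r ∈ S, ball x₀ r ⊆ Ω) : ball x₀ (sSup S) ⊆ Ω := by
  intro z hz
  rcases S.eq_empty_or_nonempty with rfl | hne
  · simp at hz
  obtain ⟨r, hr, hzr⟩ := exists_lt_of_lt_csSup hne (mem_ball.1 hz)
  exact hS r hr (mem_ball.2 hzr)

theorem norm_image_sub_tangent_le_of_norm_fderiv_sub_le {E F : Type*}
    [NormedAddCommGroup E] [NormedSpace ℝ E] [NormedAddCommGroup F] [NormedSpace ℝ F]
    {f : E → F} {f' : E → E →L[ℝ] F} {x y : E} {φ φ' : ℝ → ℝ}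
    (hf : ∀ τ ∈ Icc (0:ℝ) 1, HasFDerivAt f (f' (x + τ • (y - x))) (x + τ • (y - x)))
    (hφ : ∀ τ ∈ Icc (0:ℝ) 1, HasDerivAt φ (φ' τ) τ)
    (bound : ∀ τ ∈ Ico (0:ℝ) 1, ‖(f' (x + τ • (y - x)) - f' x) (y - x)‖ ≤ φ' τ) :
    ‖f y - (f x + f' x (y - x))‖ ≤ φ 1 - φ 0 := by
  set G : ℝ → F := fun τ => f (x + τ • (y - x)) - f x - τ • f' x (y - x)
  have hG : ∀ τ ∈ Icc (0:ℝ) 1, HasDerivAt G ((f' (x + τ • (y - x)) - f' x) (y - x)) τ := by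
    intro τ hτ
    have hγ : HasDerivAt (fun σ : ℝ => x + σ • (y - x)) (y - x) τ := by
      simpa using ((hasDerivAt_id τ).smul_const (y - x)).const_add x
    have := (((hf τ hτ).comp_hasDerivAt τ hγ).sub_const (f x)).sub
      ((hasDerivAt_id τ).smul_const (f' x (y - x)))
    exact this.congr_deriv (by simp)
  have key := image_norm_le_of_norm_deriv_right_le_deriv_boundary' (f := G)
    (B := fun τ => φ τ - φ 0)
    (fun τ hτ => (hG τ hτ).continuousAt.continuousWithinAt)
    (fun τ hτ => (hG τ (Ico_subset_Icc_self hτ)).hasDerivWithinAt)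
    (by simp [G])
    (fun τ hτ => ((hφ τ hτ).continuousAt.sub continuousAt_const).continuousWithinAt)
    (fun τ hτ => ((hφ τ (Ico_subset_Icc_self hτ)).sub_const (φ 0)).hasDerivWithinAt)
    bound (right_mem_Icc.2 zero_le_one)
  convert key using 2
  simp only [G, one_smul, add_sub_cancel]
  abel

theorem norm_fderiv_sub_apply_le_of_majorant {X Y : Type*}
    [NormedAddCommGroup X] [NormedSpace ℝ X] [NormedAddCommGroup Y] [NormedSpace ℝ Y]
    {f' : X → X →L[ℝ] Y} {x₀ : X} {κ R lam : ℝ} {ψ' : ℝ → ℝ}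
    (hmaj : ∀ x ∈ ball x₀ κ, ∀ y ∈ ball x₀ κ, ‖y - x‖ + ‖x - x₀‖ < R →
      lam * ‖f' y - f' x‖ ≤ ψ' (‖y - x‖ + ‖x - x₀‖) - ψ' ‖x - x₀‖)
    (hconv : ConvexOn ℝ (Ico 0 R) ψ') (hlam : 0 ≤ lam)
    {x y : X} (hx : x ∈ ball x₀ κ) (hy : y ∈ ball x₀ κ) {t v τ : ℝ} (htv : t < v) (hvR : v < R)
    (hxt : ‖x - x₀‖ ≤ t) (hyx : ‖y - x‖ ≤ v - t) (hτ : τ ∈ Icc (0:ℝ) 1) :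
    lam * ‖(f' (x + τ • (y - x)) - f' x) (y - x)‖ ≤
      (ψ' (t + τ * (v - t)) - ψ' t) * ‖y - x‖ ^ 2 / (v - t) := by
  rcases hτ.1.eq_or_lt with rfl | hτ0
  · simp
  set z := x + τ • (y - x)
  set ρ := ‖y - x‖
  set b := ‖x - x₀‖
  have hb : 0 ≤ b := norm_nonneg _
  have hρ : 0 ≤ ρ := norm_nonneg _
  have hd : 0 < v - t := sub_pos.2 htv
  have hz : z ∈ ball x₀ κ := (convex_ball x₀ κ).add_smul_sub_mem hx hy hτ
  have hzx : ‖z - x‖ = τ * ρ := by simp [z, ρ, norm_smul, abs_of_nonneg hτ.1]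
  have hτρ : τ * ρ ≤ τ * (v - t) := mul_le_mul_of_nonneg_left hyx hτ.1
  have hτd : τ * (v - t) ≤ v - t := mul_le_of_le_one_left hd.le hτ.2
  have hmaj' : lam * ‖f' z - f' x‖ ≤ ψ' (b + τ * ρ) - ψ' b := by
    have := hmaj x hx z hz (by rw [hzx]; linarith)
    rwa [hzx, add_comm] at this
  have hinc : (ψ' (b + τ * ρ) - ψ' b) * (τ * (v - t)) ≤ (ψ' (t + τ * (v - t)) - ψ' t) * (τ * ρ) :=
    hconv.sub_mul_le_sub_mul ⟨hb, by linarith⟩ ⟨by linarith, by linarith⟩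
      ⟨by nlinarith, by linarith⟩ ⟨by nlinarith, by linarith⟩ hxt (by positivity) hτρ
  have hinc' : (ψ' (b + τ * ρ) - ψ' b) * (v - t) ≤ (ψ' (t + τ * (v - t)) - ψ' t) * ρ :=
    le_of_mul_le_mul_left (by linarith) hτ0
  calc lam * ‖(f' z - f' x) (y - x)‖ ≤ lam * (‖f' z - f' x‖ * ρ) := by
        gcongr; exact (f' z - f' x).le_opNorm _
    _ = lam * ‖f' z - f' x‖ * ρ := (mul_assoc _ _ _).symm
    _ ≤ (ψ' (b + τ * ρ) - ψ' b) * ρ := by gcongr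
    _ ≤ (ψ' (t + τ * (v - t)) - ψ' t) * ρ ^ 2 / (v - t) := by
        rw [le_div_iff₀ hd]
        nlinarith [mul_le_mul_of_nonneg_right hinc' hρ]

theorem mul_norm_image_sub_tangent_le_of_majorant {X Y : Type*}
    [NormedAddCommGroup X] [NormedSpace ℝ X] [NormedAddCommGroup Y] [NormedSpace ℝ Y]
    {f : X → Y} {f' : X → X →L[ℝ] Y} {x₀ : X} {κ R lam : ℝ} {ψ ψ' : ℝ → ℝ}
    (hf : ∀ z ∈ ball x₀ κ, HasFDerivAt f (f' z) z)
    (hmaj : ∀ x ∈ ball x₀ κ, ∀ y ∈ ball x₀ κ, ‖y - x‖ + ‖x - x₀‖ < R →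
      lam * ‖f' y - f' x‖ ≤ ψ' (‖y - x‖ + ‖x - x₀‖) - ψ' ‖x - x₀‖)
    (hconv : ConvexOn ℝ (Ico 0 R) ψ') (hlam : 0 < lam)
    {x y : X} (hx : x ∈ ball x₀ κ) (hy : y ∈ ball x₀ κ) {t v : ℝ} (htv : t < v) (hvR : v < R)
    (hψ : ∀ u ∈ Icc t v, HasDerivAt ψ (ψ' u) u)
    (hxt : ‖x - x₀‖ ≤ t) (hyx : ‖y - x‖ ≤ v - t) :
    lam * ‖f y - (f x + f' x (y - x))‖ ≤
      (ψ v - (ψ t + ψ' t * (v - t))) * (‖y - x‖ ^ 2 / (v - t) ^ 2) := by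
  have hd : 0 < v - t := sub_pos.2 htv
  have hφ : ∀ τ ∈ Icc (0:ℝ) 1, HasDerivAt (fun σ => ψ (t + σ * (v - t)) - ψ' t * (σ * (v - t)))
      ((ψ' (t + τ * (v - t)) - ψ' t) * (v - t)) τ := by
    intro τ hτ
    have hlin : HasDerivAt (fun σ => σ * (v - t)) (v - t) τ := by
      simpa using (hasDerivAt_id τ).mul_const (v - t)
    have hψτ := hψ (t + τ * (v - t)) ⟨le_add_of_nonneg_right (mul_nonneg hτ.1 hd.le),
      by linarith [mul_le_of_le_one_left hd.le hτ.2]⟩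
    exact ((hψτ.comp τ (hlin.const_add t)).sub (hlin.const_mul (ψ' t))).congr_deriv (by ring)
  have herr := norm_image_sub_tangent_le_of_norm_fderiv_sub_le
    (φ := fun τ => (ψ (t + τ * (v - t)) - ψ' t * (τ * (v - t))) * (‖y - x‖ ^ 2 / (v - t) ^ 2) / lam)
    (fun τ hτ => hf _ ((convex_ball x₀ κ).add_smul_sub_mem hx hy hτ))
    (fun τ hτ => ((hφ τ hτ).mul_const _).div_const lam)
    (fun τ hτ => by
      rw [le_div_iff₀' hlam]
      refine (norm_fderiv_sub_apply_le_of_majorant hmaj hconv hlam.le hx hy htv hvR hxt hyx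
        (Ico_subset_Icc_self hτ)).trans_eq ?_
      field_simp)
  rw [← sub_div, le_div_iff₀' hlam] at herr
  refine herr.trans_eq ?_
  simp only [one_mul, zero_mul, mul_zero, add_zero, sub_zero, add_sub_cancel]
  ring

theorem stmt8_general
    {X Y : Type*} [NormedAddCommGroup X] [NormedSpace ℝ X]
    [NormedAddCommGroup Y] [NormedSpace ℝ Y]
    (Ω : Set X)
    (f : X → Y) (f' : X → X →L[ℝ] Y)
    (hfd : ∀ x ∈ Ω, HasFDerivAt f (f' x) x)
    (x₀ : X) (R : ℝ)
    (κ : ℝ) (hκ : κ = sSup {t : ℝ | t ∈ Ico (0:ℝ) R ∧ ball x₀ t ⊆ Ω})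
    (lam : ℝ)
    (hlam : 0 < lam)
    -- (A2): the majorant function ψ and the majorant condition
    (ψ ψ' ψ'' : ℝ → ℝ)
    (hψ1 : ∀ t ∈ Ico (0:ℝ) R, HasDerivAt ψ (ψ' t) t)
    (hψ2 : ∀ t ∈ Ico (0:ℝ) R, HasDerivAt ψ' (ψ'' t) t)
    (hmaj : ∀ x ∈ ball x₀ κ, ∀ y ∈ ball x₀ κ, ‖y - x‖ + ‖x - x₀‖ < R →
      lam * ‖f' y - f' x‖ ≤ ψ' (‖y - x‖ + ‖x - x₀‖) - ψ' ‖x - x₀‖)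
    -- (h1)-(h3)
    (h2a : ConvexOn ℝ (Ico (0:ℝ) R) ψ')
    (h2b : StrictMonoOn ψ' (Ico (0:ℝ) R))
    :
    ∀ x ∈ ball x₀ κ, ∀ y ∈ ball x₀ κ, ∀ t v : ℝ,
      0 ≤ t → t < v → v < R → ‖x - x₀‖ ≤ t → ‖y - x‖ ≤ v - t →
      lam * ‖f y - (f x + f' x (y - x))‖ ≤
          (ψ v - (ψ t + ψ' t * (v - t))) * (‖y - x‖ ^ 2 / (v - t) ^ 2) ∧
        (ψ v - (ψ t + ψ' t * (v - t))) * (‖y - x‖ ^ 2 / (v - t) ^ 2) ≤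
          1 / 2 * ψ'' v * (v - t) ^ 2 := by
  intro x hx y hy t v ht htv hvR hxt hyx
  have hΩ : ball x₀ κ ⊆ Ω := hκ ▸ ball_sSup_subset fun r hr => hr.2
  have hsub : Icc t v ⊆ Ico 0 R := fun u hu => ⟨ht.trans hu.1, hu.2.trans_lt hvR⟩
  have hψ : ∀ u ∈ Icc t v, HasDerivAt ψ (ψ' u) u := fun u hu => hψ1 u (hsub hu)
  have hlow := tangent_le_of_monotoneOn_deriv htv hψ (h2b.monotoneOn.mono hsub)
  have hup := le_tangent_add_of_convexOn_deriv htv.le hψ (h2a.subset hsub (convex_Icc t v))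
    (hψ2 v (hsub (right_mem_Icc.2 htv.le)))
  have hratio : ‖y - x‖ ^ 2 / (v - t) ^ 2 ≤ 1 :=
    div_le_one_of_le₀ (pow_le_pow_left₀ (norm_nonneg _) hyx 2) (sq_nonneg _)
  refine ⟨mul_norm_image_sub_tangent_le_of_majorant (fun z hz => hfd z (hΩ hz)) hmaj h2a hlam
    hx hy htv hvR hψ hxt hyx, ?_⟩
  calc (ψ v - (ψ t + ψ' t * (v - t))) * (‖y - x‖ ^ 2 / (v - t) ^ 2)
      ≤ ψ v - (ψ t + ψ' t * (v - t)) := mul_le_of_le_one_right (by linarith) hratio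
    _ ≤ 1 / 2 * ψ'' v * (v - t) ^ 2 := by linarith

/-- Lemma `pr:taylor`: the linearization error of `f` is majorized by the linearization error of ψ. -/
theorem stmt8
    {X Y : Type*} [NormedAddCommGroup X] [NormedSpace ℝ X] [CompleteSpace X]
    [NormedAddCommGroup Y] [NormedSpace ℝ Y] [CompleteSpace Y]
    (Ω : Set X) (hΩ : IsOpen Ω)
    (f : X → Y) (f' : X → X →L[ℝ] Y) (F : X → Set Y)
    (hfd : ∀ x ∈ Ω, HasFDerivAt f (f' x) x)
    (hf'c : ContinuousOn f' Ω)
    (hFg : IsClosed {p : X × Y | p.2 ∈ F p.1})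
    (x₀ : X) (hx₀ : x₀ ∈ Ω) (R : ℝ) (hR : 0 < R)
    (κ : ℝ) (hκ : κ = sSup {t : ℝ | t ∈ Ico (0:ℝ) R ∧ ball x₀ t ⊆ Ω})
    -- (A1): strong-regularity constants and the single-valued selection `s`
    (x₁ : X) (hx₁ : x₁ ∈ Ω)
    (hx₁sol : -(f x₀ + f' x₀ (x₁ - x₀)) ∈ F x₁)
    (lam rx1 r0 rx0 : ℝ)
    (hlam : 0 < lam) (hrx1 : 0 < rx1) (hr0 : 0 < r0) (hrx0 : 0 < rx0)
    (hball : ball x₀ rx0 ⊆ Ω)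
    (s : X → Y → X)
    (hA1 : ∀ x ∈ ball x₀ rx0,
      lam * ‖f' x - f' x₀‖ < 1 ∧
      (∀ z ∈ ball (0:Y) r0,
        ({y : X | z - (f x + f' x (y - x)) ∈ F y} ∩ ball x₁ rx1) = {s x z}) ∧
      (∀ u ∈ ball (0:Y) r0, ∀ v ∈ ball (0:Y) r0,
        ‖s x u - s x v‖ ≤ lam / (1 - lam * ‖f' x - f' x₀‖) * ‖u - v‖))
    -- (A2): the majorant function ψ and the majorant condition
    (ψ ψ' ψ'' : ℝ → ℝ)
    (hψ1 : ∀ t ∈ Ico (0:ℝ) R, HasDerivAt ψ (ψ' t) t)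
    (hψ2 : ∀ t ∈ Ico (0:ℝ) R, HasDerivAt ψ' (ψ'' t) t)
    (hψ2c : ContinuousOn ψ'' (Ico (0:ℝ) R))
    (hmaj : ∀ x ∈ ball x₀ κ, ∀ y ∈ ball x₀ κ, ‖y - x‖ + ‖x - x₀‖ < R →
      lam * ‖f' y - f' x‖ ≤ ψ' (‖y - x‖ + ‖x - x₀‖) - ψ' ‖x - x₀‖)
    -- (A3)
    (hA3 : ‖x₁ - x₀‖ ≤ ψ 0)
    -- (h1)-(h3)
    (h1 : 0 < ψ 0) (h1' : ψ' 0 = -1)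
    (h2a : ConvexOn ℝ (Ico (0:ℝ) R) ψ')
    (h2b : StrictMonoOn ψ' (Ico (0:ℝ) R))
    (tstar : ℝ)
    (h3 : IsLeast {t ∈ Ico (0:ℝ) R | ψ t = 0} tstar)
    -- (A4)
    (hA4a : tstar ≤ min κ rx0)
    (hA4b : ψ'' tstar / (2 * lam) * ψ 0 ^ 2 < r0)
    :
    ∀ x ∈ ball x₀ κ, ∀ y ∈ ball x₀ κ, ∀ t v : ℝ,
      0 ≤ t → t < v → v < R → ‖x - x₀‖ ≤ t → ‖y - x‖ ≤ v - t →
      lam * ‖f y - (f x + f' x (y - x))‖ ≤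
          (ψ v - (ψ t + ψ' t * (v - t))) * (‖y - x‖ ^ 2 / (v - t) ^ 2) ∧
        (ψ v - (ψ t + ψ' t * (v - t))) * (‖y - x‖ ^ 2 / (v - t) ^ 2) ≤
          1 / 2 * ψ'' v * (v - t) ^ 2 :=
  stmt8_general Ω f f' hfd x₀ R κ hκ lam hlam ψ ψ' ψ'' hψ1 hψ2 hmaj h2a h2b
end

section
/- Let X, Y be Banach spaces, Ω ⊆ X an open set, f : Ω → Y an analytic function, x₀ ∈ Ω and λ > 0. Suppose γ := sup_{n ≥ 2} ‖(λ/n!)·f⁽ⁿ⁾(x₀)‖^{1/(n−1)} < +∞ and B(x₀, 1/γ) ⊆ Ω. Then for all x ∈ B(x₀, 1/γ) it holds that λ‖f″(x)‖ ≤ 2γ/(1 − γ‖x − x₀‖)³. -/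
/-!
Let `qₙ = Dⁿf(x₀)/n!` be the Taylor series of `f` at `x₀`. The definition of `γ` gives
that `λ‖qₙ‖ ≤ γⁿ⁻¹` for `n ≥ 2`, so `q` converges on `B(x₀, 1/γ)` and, by the identity theorem,
sums to `f` there. Differentiating twice term by term, the `n`-th coefficient of `f″` has norm at
most `(n+1)(n+2)‖qₙ₊₂‖ ≤ (n+1)(n+2)γⁿ⁺¹/λ`, and `∑ (n+1)(n+2)/2 · sⁿ = (1 - s)⁻³`.
-/

open Metric Set Filter
open scoped ENNReal NNReal Nat

namespace FormalMultilinearSeries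

variable {𝕜 E F : Type*} [NontriviallyNormedField 𝕜] [NormedAddCommGroup E] [NormedSpace 𝕜 E]
  [NormedAddCommGroup F] [NormedSpace 𝕜 F] (p : FormalMultilinearSeries 𝕜 E F)

theorem norm_changeOriginSeries_le (k l : ℕ) :
    ‖p.changeOriginSeries k l‖ ≤ (k + l).choose l * ‖p (k + l)‖ := by
  have h := p.nnnorm_changeOriginSeries_le_tsum k l
  rw [tsum_fintype, Finset.sum_const, Finset.card_univ, Fintype.card_finset_len,
    Fintype.card_fin, nsmul_eq_mul] at h
  exact_mod_cast h

theorem norm_derivSeries_le (n : ℕ) : ‖p.derivSeries n‖ ≤ (n + 1) * ‖p (n + 1)‖ :=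
  calc ‖p.derivSeries n‖ ≤ ‖p.changeOriginSeries 1 n‖ :=
        (ContinuousLinearMap.norm_compContinuousMultilinearMap_le _ _).trans <|
          mul_le_of_le_one_left (norm_nonneg _)
            (ContinuousLinearMap.opNorm_le_bound _ zero_le_one (by simp))
    _ ≤ (n + 1) * ‖p (n + 1)‖ := by
        have h := p.norm_changeOriginSeries_le 1 n
        rw [add_comm 1 n, Nat.choose_succ_self_right] at h
        exact_mod_cast h

theorem norm_derivSeries_derivSeries_le (n : ℕ) :
    ‖p.derivSeries.derivSeries n‖ ≤ (n + 1) * (n + 2) * ‖p (n + 2)‖ :=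
  calc ‖p.derivSeries.derivSeries n‖ ≤ (n + 1) * ‖p.derivSeries (n + 1)‖ :=
        p.derivSeries.norm_derivSeries_le n
    _ ≤ (n + 1) * ((n + 2) * ‖p (n + 2)‖) := by
        gcongr
        simpa [add_assoc, one_add_one_eq_two] using p.norm_derivSeries_le (n + 1)
    _ = (n + 1) * (n + 2) * ‖p (n + 2)‖ := by ring

theorem le_radius_of_norm_le_mul_pow {C a : ℝ} (ha : 0 ≤ a) (hp : ∀ n, ‖p (n + 2)‖ ≤ C * a ^ n)
    {r : ℝ≥0} (hr : a * r ≤ 1) : (r : ℝ≥0∞) ≤ p.radius := by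
  have hC : 0 ≤ C := by simpa using (norm_nonneg _).trans (hp 0)
  refine p.le_radius_of_bound (max (max ‖p 0‖ (‖p 1‖ * r)) (C * r ^ 2)) fun n => ?_
  match n with
  | 0 => simp
  | 1 => simp
  | n + 2 =>
    calc ‖p (n + 2)‖ * r ^ (n + 2) ≤ C * a ^ n * r ^ (n + 2) := by gcongr; exact hp n
      _ = C * r ^ 2 * (a * r) ^ n := by ring
      _ ≤ C * r ^ 2 := mul_le_of_le_one_right (by positivity) (pow_le_one₀ (by positivity) hr)
      _ ≤ _ := le_max_right _ _

end FormalMultilinearSeries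

theorem HasFPowerSeriesOnBall.norm_iteratedFDeriv_two_le {𝕜 E F : Type*}
    [NontriviallyNormedField 𝕜] [NormedAddCommGroup E] [NormedSpace 𝕜 E]
    [NormedAddCommGroup F] [NormedSpace 𝕜 F] [CompleteSpace F]
    {f : E → F} {p : FormalMultilinearSeries 𝕜 E F} {x y : E} {r : ℝ≥0∞}
    (hf : HasFPowerSeriesOnBall f p x r) {C a : ℝ} (ha : 0 ≤ a)
    (hp : ∀ n, ‖p (n + 2)‖ ≤ C * a ^ n) (hy : y ∈ eball (0 : E) r) (hay : a * ‖y‖ < 1) :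
    ‖iteratedFDeriv 𝕜 2 f (x + y)‖ ≤ 2 * C / (1 - a * ‖y‖) ^ 3 := by
  have hgeom : HasSum (fun n : ℕ => 2 * C * ((n + 2).choose 2 * (a * ‖y‖) ^ n))
      (2 * C / (1 - a * ‖y‖) ^ 3) := by
    simpa [div_eq_mul_inv] using (hasSum_choose_mul_geometric_of_norm_lt_one 2
      (by rwa [Real.norm_of_nonneg (by positivity)])).mul_left (2 * C)
  rw [← norm_iteratedFDeriv_fderiv, norm_iteratedFDeriv_one]
  refine (hf.fderiv.fderiv.hasSum hy).norm_le_of_bounded hgeom fun n => ?_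
  calc ‖p.derivSeries.derivSeries n fun _ => y‖ ≤ ‖p.derivSeries.derivSeries n‖ * ‖y‖ ^ n :=
        ContinuousMultilinearMap.le_opNorm_mul_pow_of_le _ (pi_norm_const_le y)
    _ ≤ (n + 1) * (n + 2) * (C * a ^ n) * ‖y‖ ^ n := by
        gcongr
        exact (p.norm_derivSeries_derivSeries_le n).trans (by gcongr; exact hp n)
    _ = 2 * C * ((n + 2).choose 2 * (a * ‖y‖) ^ n) := by
        rw [Nat.cast_choose_two]; push_cast; ring

section Taylor

variable (𝕜 : Type*) {E F : Type*} [NontriviallyNormedField 𝕜] [NormedAddCommGroup E]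
  [NormedSpace 𝕜 E] [NormedAddCommGroup F] [NormedSpace 𝕜 F]

noncomputable def taylorSeries (f : E → F) (x : E) : FormalMultilinearSeries 𝕜 E F :=
  fun n => (n ! : 𝕜)⁻¹ • iteratedFDeriv 𝕜 n f x

variable {𝕜}

theorem HasFPowerSeriesOnBall.taylorSeries_apply_diag [CharZero 𝕜] [CompleteSpace F]
    {f : E → F} {p : FormalMultilinearSeries 𝕜 E F} {x : E} {r : ℝ≥0∞}
    (hf : HasFPowerSeriesOnBall f p x r) (n : ℕ) (y : E) :
    taylorSeries 𝕜 f x n (fun _ => y) = p n (fun _ => y) := by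
  rw [taylorSeries, _root_.smul_apply, ← hf.factorial_smul, ← Nat.cast_smul_eq_nsmul 𝕜,
    inv_smul_smul₀ (Nat.cast_ne_zero.2 n.factorial_ne_zero)]

end Taylor

theorem AnalyticOnNhd.hasFPowerSeriesOnBall_taylorSeries {E F : Type*}
    [NormedAddCommGroup E] [NormedSpace ℝ E] [NormedAddCommGroup F] [NormedSpace ℝ F]
    [CompleteSpace F] {f : E → F} {x : E} {r : ℝ≥0∞} (hf : AnalyticOnNhd ℝ f (eball x r))
    (hr₀ : 0 < r) (hr : r ≤ (taylorSeries ℝ f x).radius) :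
    HasFPowerSeriesOnBall f (taylorSeries ℝ f x) x r := by
  set q := taylorSeries ℝ f x
  obtain ⟨p, ρ, hp⟩ := hf x (mem_eball_self hr₀)
  have hfq : HasFPowerSeriesOnBall f q x (min ρ r) :=
    ⟨(min_le_right _ _).trans hr, lt_min hp.r_pos hr₀, fun hy => by
      simpa only [q, hp.taylorSeries_apply_diag] using
        hp.hasSum (eball_subset_eball (min_le_left _ _) hy)⟩
  have hg : HasFPowerSeriesOnBall (fun z => q.sum (z - x)) q x r := by
    simpa using ((q.hasFPowerSeriesOnBall (hr₀.trans_le hr)).comp_sub x).mono hr₀ hr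
  refine hg.congr (EqOn.symm ?_)
  refine hf.eqOn_of_preconnected_of_eventuallyEq hg.analyticOnNhd isPreconnected_eball
    (mem_eball_self hr₀) ?_
  exact eventuallyEq_of_mem (eball_mem_nhds x hfq.r_pos)
    (hfq.unique (hg.mono hfq.r_pos (min_le_right _ _)))

theorem Real.le_pow_of_rpow_one_div_le {a b : ℝ} {m : ℕ} (ha : 0 ≤ a) (hb : 0 ≤ b) (hm : 1 < m)
    (h : a ^ (1 / ((m : ℝ) - 1)) ≤ b) : a ≤ b ^ (m - 1) := by
  have hm' : (0 : ℝ) < (m : ℝ) - 1 := by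
    have : (1 : ℝ) < m := by exact_mod_cast hm
    linarith
  rw [one_div, Real.rpow_inv_le_iff_of_pos ha hb hm'] at h
  rwa [← Nat.cast_pred (by omega), Real.rpow_natCast] at h

theorem stmt18_general
    {X Y : Type*} [NormedAddCommGroup X] [NormedSpace ℝ X]
    [NormedAddCommGroup Y] [NormedSpace ℝ Y] [CompleteSpace Y]
    (Ω : Set X)
    (f : X → Y) (hf : AnalyticOnNhd ℝ f Ω)
    (x₀ : X)
    (lam : ℝ) (hlam : 0 < lam)
    (γ : ℝ) (hγpos : 0 < γ)
    (hγ : IsLUB {r : ℝ | ∃ m : ℕ, 2 ≤ m ∧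
      r = ‖(lam / (m.factorial : ℝ)) • iteratedFDeriv ℝ m f x₀‖ ^ ((1:ℝ) / ((m:ℝ) - 1))} γ)
    (hball : ball x₀ (1 / γ) ⊆ Ω) :
    ∀ x ∈ ball x₀ (1 / γ),
      lam * ‖iteratedFDeriv ℝ 2 f x‖ ≤ 2 * γ / (1 - γ * ‖x - x₀‖) ^ 3 := by
  intro x hx
  set q := taylorSeries ℝ f x₀
  have hq : ∀ n, ‖q (n + 2)‖ ≤ γ / lam * γ ^ n := fun n => by
    have h := Real.le_pow_of_rpow_one_div_le (norm_nonneg _) hγpos.le (by omega : 1 < n + 2)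
      (hγ.1 ⟨n + 2, by omega, rfl⟩)
    rw [show (lam / ((n + 2)! : ℝ)) • iteratedFDeriv ℝ (n + 2) f x₀ = lam • q (n + 2) by
      simp only [q, taylorSeries, smul_smul, div_eq_mul_inv], norm_smul,
      Real.norm_of_nonneg hlam.le] at h
    rw [div_mul_eq_mul_div, ← pow_succ', le_div_iff₀ hlam, mul_comm]
    exact h
  have hR : ENNReal.ofReal (1 / γ) ≤ q.radius :=
    q.le_radius_of_norm_le_mul_pow hγpos.le hq (by simp [hγpos.le, hγpos.ne'])
  have hfq : HasFPowerSeriesOnBall f q x₀ (ENNReal.ofReal (1 / γ)) :=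
    AnalyticOnNhd.hasFPowerSeriesOnBall_taylorSeries (hf.mono (by rwa [eball_ofReal]))
      (by simpa using hγpos) hR
  have hy : x - x₀ ∈ eball (0 : X) (ENNReal.ofReal (1 / γ)) := by
    simpa [eball_ofReal, dist_eq_norm] using hx
  have hγy : γ * ‖x - x₀‖ < 1 := by
    rw [mem_ball_iff_norm, lt_div_iff₀ hγpos] at hx
    linarith
  have h2 := hfq.norm_iteratedFDeriv_two_le hγpos.le hq hy hγy
  rw [add_sub_cancel] at h2
  calc lam * ‖iteratedFDeriv ℝ 2 f x‖ ≤ lam * (2 * (γ / lam) / (1 - γ * ‖x - x₀‖) ^ 3) := by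
        gcongr
    _ = 2 * γ / (1 - γ * ‖x - x₀‖) ^ 3 := by field_simp

/-- Lemma `lem.cond1`: if `f` is analytic on `Ω` and
`γ = sup_{n ≥ 2} ‖(λ/n!) f⁽ⁿ⁾(x₀)‖^{1/(n-1)} < ∞`, then
`λ‖f″(x)‖ ≤ 2γ/(1 - γ‖x - x₀‖)³` on `B(x₀, 1/γ)`. -/
theorem stmt18
    {X Y : Type*} [NormedAddCommGroup X] [NormedSpace ℝ X] [CompleteSpace X]
    [NormedAddCommGroup Y] [NormedSpace ℝ Y] [CompleteSpace Y]
    (Ω : Set X) (hΩ : IsOpen Ω)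
    (f : X → Y) (hf : AnalyticOnNhd ℝ f Ω)
    (x₀ : X) (hx₀ : x₀ ∈ Ω)
    (lam : ℝ) (hlam : 0 < lam)
    (γ : ℝ) (hγpos : 0 < γ)
    (hγ : IsLUB {r : ℝ | ∃ m : ℕ, 2 ≤ m ∧
      r = ‖(lam / (m.factorial : ℝ)) • iteratedFDeriv ℝ m f x₀‖ ^ ((1:ℝ) / ((m:ℝ) - 1))} γ)
    (hball : ball x₀ (1 / γ) ⊆ Ω) :
    ∀ x ∈ ball x₀ (1 / γ),
      lam * ‖iteratedFDeriv ℝ 2 f x‖ ≤ 2 * γ / (1 - γ * ‖x - x₀‖) ^ 3 :=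
  stmt18_general Ω f hf x₀ lam hlam γ hγpos hγ hball
end
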